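/- arXiv:1708.05213 — 5 statements merged into one kernel-verified Lean document; each statement's English description precedes it below -/
import Mathlib

section
/- If C₁ and C₂ are closed convex cones in ℝⁿ such that C₁ ∪ C₂ is convex, then C₁° ∪ C₂° is convex, and (C₁ ∩ C₂)° = C₁° ∪ C₂° and (C₁ ∪ C₂)° = C₁° ∩ C₂°. -/
open scoped RealInnerProductSpace
open MeasureTheory

attribute [local instance] Classical.propDecidable

noncomputable section

abbrev E (n : ℕ) : Type := EuclideanSpace ℝ (Fin n)

/-- The dual cone `C° = {x : ⟪x,y⟫ ≤ 0 for all y ∈ C}`. -/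
def polarDual {n : ℕ} (C : Set (E n)) : Set (E n) := {x | ∀ y ∈ C, ⟪x, y⟫ ≤ 0}

/-- A convex polyhedral cone: a finite intersection of closed halfspaces whose
boundaries contain the origin (empty intersection = ℝⁿ). -/
def IsPolyhedralCone {n : ℕ} (C : Set (E n)) : Prop :=
  ∃ s : Finset (E n), C = {x | ∀ u ∈ s, ⟪u, x⟫ ≤ 0}

/-- A (nonempty) compact convex polytope: the convex hull of a nonempty finite set. -/
def IsPolytope {n : ℕ} (P : Set (E n)) : Prop :=
  ∃ s : Finset (E n), s.Nonempty ∧ P = convexHull ℝ (s : Set (E n))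

/-- A polyhedron: a finite union of compact convex polytopes (possibly empty). -/
def IsPolyhedron {n : ℕ} (P : Set (E n)) : Prop :=
  ∃ F : Finset (Set (E n)), (∀ A ∈ F, IsPolytope A) ∧ P = ⋃₀ F

/-- The tangent cone `Tan(P,x) = {v : [x, x+λv] ⊆ P for some λ > 0}`. -/
def Tan {n : ℕ} (P : Set (E n)) (x : E n) : Set (E n) :=
  {v | ∃ l : ℝ, 0 < l ∧ segment ℝ x (x + l • v) ⊆ P}

/-- The (linear) dimension of a cone, i.e. the dimension of its linear span. -/
def coneDim {n : ℕ} (C : Set (E n)) : ℕ := Module.finrank ℝ (Submodule.span ℝ C)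

/-- A valuation on the family of convex polyhedral cones. -/
def IsConeValuation {n : ℕ} (φ : Set (E n) → ℝ) : Prop :=
  ∀ C D : Set (E n), IsPolyhedralCone C → IsPolyhedralCone D → IsPolyhedralCone (C ∪ D) →
    φ (C ∪ D) + φ (C ∩ D) = φ C + φ D

/-- A simple valuation vanishes on cones of dimension `< n`. -/
def IsSimple {n : ℕ} (φ : Set (E n) → ℝ) : Prop :=
  ∀ C : Set (E n), IsPolyhedralCone C → coneDim C < n → φ C = 0

/-- A finite union of convex polyhedral cones (possibly empty). -/
def IsConeUnion {n : ℕ} (S : Set (E n)) : Prop :=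
  ∃ F : Finset (Set (E n)), (∀ A ∈ F, IsPolyhedralCone A) ∧ S = ⋃₀ F

/-- A relatively open polyhedral cone: the relative interior of a convex polyhedral cone. -/
def IsROCone {n : ℕ} (A : Set (E n)) : Prop :=
  ∃ C : Set (E n), IsPolyhedralCone C ∧ A = intrinsicInterior ℝ C

/-- A finite union of relatively open polyhedral cones (possibly empty). -/
def IsROConeUnion {n : ℕ} (S : Set (E n)) : Prop :=
  ∃ F : Finset (Set (E n)), (∀ A ∈ F, IsROCone A) ∧ S = ⋃₀ F

/-- The normal cone `N(P,x) = {u : ⟪u, y - x⟫ ≤ 0 for all y ∈ P}`. -/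
def normalCone {n : ℕ} (P : Set (E n)) (x : E n) : Set (E n) :=
  {u | ∀ y ∈ P, ⟪u, y - x⟫ ≤ 0}

/-- The outer angle `Γ(C) = σ(C° ∩ S^{n-1})`, expressed via the normalized
solid-angle (cone-volume) measure, which agrees with the normalized spherical
Lebesgue measure of `C° ∩ S^{n-1}` for cones `C°`. -/
def outerAngle {n : ℕ} (C : Set (E n)) : ℝ :=
  (volume (polarDual C ∩ Metric.closedBall (0 : E n) 1)).toReal /
    (volume (Metric.closedBall (0 : E n) 1)).toReal

theorem segment_inter_inter_nonempty_of_convex_union {V : Type*} [AddCommGroup V] [Module ℝ V]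
    [TopologicalSpace V] [ContinuousAdd V] [ContinuousSMul ℝ V] {A B : Set V}
    (hA : IsClosed A) (hB : IsClosed B) (hAB : Convex ℝ (A ∪ B)) {a b : V}
    (ha : a ∈ A) (hb : b ∈ B) : (segment ℝ a b ∩ (A ∩ B)).Nonempty :=
  isPreconnected_closed_iff.mp (convex_segment a b).isPreconnected A B hA hB
    (hAB.segment_subset (Or.inl ha) (Or.inr hb))
    ⟨a, left_mem_segment ℝ a b, ha⟩ ⟨b, right_mem_segment ℝ a b, hb⟩

section polarDual

variable {n : ℕ}

theorem notMem_polarDual {C : Set (E n)} {x : E n} :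
    x ∉ polarDual C ↔ ∃ y ∈ C, 0 < ⟪x, y⟫ := by
  simp [polarDual]

theorem convex_polarDual (C : Set (E n)) : Convex ℝ (polarDual C) := by
  intro p hp q hq a b ha hb _ y hy
  rw [inner_add_left, real_inner_smul_left, real_inner_smul_left]
  nlinarith [hp y hy, hq y hy]

theorem polarDual_anti {C D : Set (E n)} (h : C ⊆ D) : polarDual D ⊆ polarDual C :=
  fun _ hx y hy => hx y (h hy)

theorem polarDual_union (C₁ C₂ : Set (E n)) :
    polarDual (C₁ ∪ C₂) = polarDual C₁ ∩ polarDual C₂ := by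
  ext
  simp [polarDual, or_imp, forall_and]

/-- If `x` lies in neither polar, it is positive at some `y₁ ∈ C₁` and `y₂ ∈ C₂`, hence on the
whole segment `[y₁, y₂]`; but by connectedness that segment meets `C₁ ∩ C₂`. -/
theorem polarDual_inter_of_convex_union {C₁ C₂ : Set (E n)} (hcl₁ : IsClosed C₁)
    (hcl₂ : IsClosed C₂) (hU : Convex ℝ (C₁ ∪ C₂)) :
    polarDual (C₁ ∩ C₂) = polarDual C₁ ∪ polarDual C₂ := by
  refine subset_antisymm (fun x hx => ?_)
    (Set.union_subset (polarDual_anti Set.inter_subset_left)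
      (polarDual_anti Set.inter_subset_right))
  by_contra hx'
  obtain ⟨y₁, hy₁, hxy₁⟩ := notMem_polarDual.mp fun h => hx' (Or.inl h)
  obtain ⟨y₂, hy₂, hxy₂⟩ := notMem_polarDual.mp fun h => hx' (Or.inr h)
  obtain ⟨y, hy, hyC⟩ := segment_inter_inter_nonempty_of_convex_union hcl₁ hcl₂ hU hy₁ hy₂
  have hpos : segment ℝ y₁ y₂ ⊆ {w | 0 < ⟪x, w⟫} :=
    (convex_halfSpace_gt (innerₗ (E n) x).isLinear 0).segment_subset hxy₁ hxy₂
  exact (hpos hy).not_ge (hx y hyC)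

end polarDual

theorem stmt0_general {n : ℕ} (C₁ C₂ : Set (E n))
    (hcl₁ : IsClosed C₁) (hcl₂ : IsClosed C₂)
    (hU : Convex ℝ (C₁ ∪ C₂)) :
    Convex ℝ (polarDual C₁ ∪ polarDual C₂) ∧
    polarDual (C₁ ∩ C₂) = polarDual C₁ ∪ polarDual C₂ ∧
    polarDual (C₁ ∪ C₂) = polarDual C₁ ∩ polarDual C₂ := by
  have hinter := polarDual_inter_of_convex_union hcl₁ hcl₂ hU
  exact ⟨hinter ▸ convex_polarDual _, hinter, polarDual_union C₁ C₂⟩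

/-- If `C₁, C₂` are closed convex cones with `C₁ ∪ C₂` convex, then `C₁° ∪ C₂°` is
convex, `(C₁ ∩ C₂)° = C₁° ∪ C₂°` and `(C₁ ∪ C₂)° = C₁° ∩ C₂°`. -/
theorem stmt0 {n : ℕ} (C₁ C₂ : Set (E n))
    (hcl₁ : IsClosed C₁) (hcl₂ : IsClosed C₂)
    (hcv₁ : Convex ℝ C₁) (hcv₂ : Convex ℝ C₂)
    (h0₁ : (0 : E n) ∈ C₁) (h0₂ : (0 : E n) ∈ C₂)
    (hcone₁ : ∀ (c : ℝ), 0 ≤ c → ∀ x ∈ C₁, c • x ∈ C₁)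
    (hcone₂ : ∀ (c : ℝ), 0 ≤ c → ∀ x ∈ C₂, c • x ∈ C₂)
    (hU : Convex ℝ (C₁ ∪ C₂)) :
    Convex ℝ (polarDual C₁ ∪ polarDual C₂) ∧
    polarDual (C₁ ∩ C₂) = polarDual C₁ ∪ polarDual C₂ ∧
    polarDual (C₁ ∪ C₂) = polarDual C₁ ∩ polarDual C₂ :=
  stmt0_general C₁ C₂ hcl₁ hcl₂ hU
end
end

section
/- If C is a closed convex polyhedral cone in ℝⁿ, then its dual cone C° is also a closed convex polyhedral cone. -/
open scoped RealInnerProductSpace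
open MeasureTheory

attribute [local instance] Classical.propDecidable

noncomputable section

/-!
Fourier–Motzkin elimination: cutting the cone hull of a set `t` by a halfspace `0 ≤ φ` gives the
cone hull of the generators of `t` lying in the halfspace together with, for each pair `v, w` of
generators on opposite sides, the combination `φ w • v - φ v • w` on the hyperplane `φ = 0`.
Hence, starting from finitely many generators of the whole space, every intersection of finitely
many halfspaces is the cone hull of a finite set `t` (Weyl). The dual of such a cone is cut out by
the finitely many halfspaces `⟪·, w⟫ ≤ 0`, `w ∈ t`.
-/

open scoped Pointwise

namespace PointedCone

variable {𝕜 M N : Type*} [Field 𝕜] [LinearOrder 𝕜] [IsStrictOrderedRing 𝕜]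
  [AddCommGroup M] [Module 𝕜 M] [AddCommGroup N] [Module 𝕜 N]

section FourierMotzkin

variable (φ : M →ₗ[𝕜] 𝕜)

lemma map_neg_or_eq_zero_of_mem_hull {s : Set M} (hs : ∀ v ∈ s, φ v < 0) {x : M}
    (hx : x ∈ hull 𝕜 s) : φ x < 0 ∨ x = 0 := by
  induction hx using Submodule.span_induction with
  | mem v hv => exact .inl (hs v hv)
  | zero => exact .inr rfl
  | add a b _ _ ha hb =>
    rcases ha with ha | rfl <;> rcases hb with hb | rfl
    · exact .inl (by rw [map_add]; linarith)
    all_goals simp_all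
  | smul c a _ ha =>
    obtain ⟨c, hc⟩ := c
    rcases ha with ha | rfl
    · rcases hc.eq_or_lt with rfl | hc
      · exact .inr (by simp)
      · exact .inl (by simpa [Nonneg.mk_smul] using mul_neg_of_pos_of_neg hc ha)
    · simp

def fourierMotzkin (t : Set M) : Set M :=
  {w ∈ t | 0 ≤ φ w} ∪
    Set.image2 (fun v w => φ w • v - φ v • w) {v ∈ t | φ v < 0} {w ∈ t | 0 ≤ φ w}

lemma smul_sub_smul_mem_hull_image2 {s t : Set M} {p q : M} (hp : p ∈ hull 𝕜 s)
    (hq : q ∈ hull 𝕜 t) :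
    φ q • p - φ p • q ∈ hull 𝕜 (Set.image2 (fun v w => φ w • v - φ v • w) s t) := by
  let B : M →ₗ[𝕜] M →ₗ[𝕜] M := LinearMap.mk₂ 𝕜 (fun v w => φ w • v - φ v • w)
    (fun _ _ _ => by simp only [map_add, smul_add, add_smul]; abel)
    (fun _ _ _ => by simp only [map_smul, smul_eq_mul]; module)
    (fun _ _ _ => by simp only [map_add, smul_add, add_smul]; abel)
    (fun _ _ _ => by simp only [map_smul, smul_eq_mul]; module)
  have hmem := Submodule.apply_mem_map₂ (B.restrictScalars₁₂ {c : 𝕜 // 0 ≤ c} {c : 𝕜 // 0 ≤ c})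
    hp hq
  rwa [Submodule.map₂_span_span] at hmem

theorem hull_inf_comap_positive (t : Set M) :
    hull 𝕜 t ⊓ (positive 𝕜 𝕜).comap φ = hull 𝕜 (fourierMotzkin φ t) := by
  apply le_antisymm
  · intro x hx
    obtain ⟨hx, hφx : 0 ≤ φ x⟩ := Submodule.mem_inf.1 hx
    have ht : t = {v ∈ t | φ v < 0} ∪ {w ∈ t | 0 ≤ φ w} := by
      ext v; by_cases φ v < 0 <;> simp_all [not_lt]
    rw [ht, hull, Submodule.span_union, Submodule.mem_sup] at hx
    obtain ⟨p, hp, q, hq, rfl⟩ := hx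
    have hq' : q ∈ hull 𝕜 (fourierMotzkin φ t) := Submodule.span_mono Set.subset_union_left hq
    rcases map_neg_or_eq_zero_of_mem_hull φ (fun v hv => hv.2) hp with hφp | rfl
    · have hφq : 0 < φ q := by rw [map_add] at hφx; linarith
      have hpair : φ q • p - φ p • q ∈ hull 𝕜 (fourierMotzkin φ t) :=
        Submodule.span_mono Set.subset_union_right (smul_sub_smul_mem_hull_image2 φ hp hq)
      have hscaled : φ q • (p + q) = (φ q • p - φ p • q) + φ (p + q) • q := by
        rw [map_add]; module
      rw [← inv_smul_smul₀ hφq.ne' (p + q), hscaled]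
      exact smul_mem _ (inv_nonneg.2 hφq.le) (add_mem hpair (smul_mem _ hφx hq'))
    · simpa using hq'
  · rw [Submodule.span_le]
    rintro _ (⟨hw, hφw⟩ | ⟨v, ⟨hv, hφv⟩, w, ⟨hw, hφw⟩, rfl⟩)
    · exact ⟨subset_hull hw, hφw⟩
    · refine ⟨?_, ?_⟩
      · show φ w • v - φ v • w ∈ hull 𝕜 t
        rw [sub_eq_add_neg, ← neg_smul]
        exact add_mem (smul_mem _ hφw (subset_hull hv))
          (smul_mem _ (neg_nonneg.2 hφv.le) (subset_hull hw))
      · show 0 ≤ φ _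
        simp [mul_comm]

theorem FG.inf_comap_positive {C : PointedCone 𝕜 M} (hC : C.FG) :
    (C ⊓ (positive 𝕜 𝕜).comap φ).FG := by
  obtain ⟨t, rfl⟩ := hC
  have ht := t.finite_toSet
  refine Submodule.fg_def.2 ⟨_, ?_, (hull_inf_comap_positive φ t).symm⟩
  exact (ht.sep _).union ((ht.sep _).image2 _ (ht.sep _))

end FourierMotzkin

theorem fg_top [Module.Finite 𝕜 M] : (⊤ : PointedCone 𝕜 M).FG := by
  obtain ⟨S, hS⟩ := Module.Finite.fg_top (R := 𝕜) (M := M)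
  refine Submodule.fg_def.2 ⟨S ∪ -S, S.finite_toSet.union S.finite_toSet.neg,
    eq_top_iff.2 fun x _ => lineal_le _ ?_⟩
  have hlineal : (⊤ : Submodule 𝕜 M) ≤ (hull 𝕜 (S ∪ -S : Set M)).lineal := by
    rw [← hS, Submodule.span_le]
    exact fun s hs => ⟨subset_hull (.inl hs), subset_hull (.inr (by simpa using hs))⟩
  exact hlineal trivial

theorem DualFG.fg [Module.Finite 𝕜 N] {p : M →ₗ[𝕜] N →ₗ[𝕜] 𝕜} {C : PointedCone 𝕜 N}
    (hC : C.DualFG p) : C.FG := by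
  classical
  obtain ⟨s, rfl⟩ := hC
  induction s using Finset.induction with
  | empty => simpa using fg_top
  | insert x s _ ih =>
    rw [Finset.coe_insert, dual_insert, dual_singleton, inf_comm]
    exact FG.inf_comap_positive _ ih

end PointedCone

open PointedCone

def polarPairing (n : ℕ) : E n →ₗ[ℝ] E n →ₗ[ℝ] ℝ := -innerₗ (E n)

lemma coe_dual_polarPairing {n : ℕ} (s : Finset (E n)) :
    (dual (polarPairing n) (s : Set (E n)) : Set (E n)) = {x | ∀ u ∈ s, ⟪u, x⟫ ≤ 0} := by
  ext; simp [polarPairing]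

lemma polarDual_eq_dual {n : ℕ} (C : Set (E n)) :
    polarDual C = dual (polarPairing n) C := by
  ext; simp [polarDual, polarPairing, real_inner_comm]

/-- The dual cone of a convex polyhedral cone is a convex polyhedral cone. -/
theorem stmt1 {n : ℕ} (C : Set (E n)) (hC : IsPolyhedralCone C) :
    IsPolyhedralCone (polarDual C) := by
  obtain ⟨s, rfl⟩ := hC
  obtain ⟨t, ht⟩ := (DualFG.dual_of_finset (polarPairing n) s).fg
  refine ⟨t, ?_⟩
  rw [← coe_dual_polarPairing, polarDual_eq_dual, ← ht, dual_hull, coe_dual_polarPairing]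
end
end

section
/- Every weakly additive real function on the family of convex polytopes in ℝⁿ is fully additive and admits an additive extension (a valuation) to the family of all polyhedra (finite unions of convex polytopes). -/
open scoped RealInnerProductSpace
open MeasureTheory

attribute [local instance] Classical.propDecidable

noncomputable section

/-!
Cutting by a hyperplane `H`, i.e. replacing each polytope `P` of a formal combination by
`P ∩ H⁺ + P ∩ H⁻ - P ∩ H`, changes neither the indicator function of the combination nor, by weak
additivity, its `φ`-value. By Minkowski–Weyl every polytope is cut out by finitely many
halfspaces; cutting a combination by all bounding hyperplanes turns each term into a closed cell
of a single arrangement, and the indicators of distinct nonempty cells are linearly independent.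
Hence (Groemer's lemma) a combination of polytopes with vanishing indicator has vanishing
`φ`-value: `φ` is a well-defined linear function of the indicator. Inclusion–exclusion for
indicators then gives full additivity and the extension to polyhedra, which is additive because
`1_{A ∪ B} + 1_{A ∩ B} = 1_A + 1_B`.
-/

namespace Groemer

open Filter Topology Pointwise

abbrev ind {α : Type*} (S : Set α) : α → ℝ := S.indicator 1

section Polytope

variable {V : Type} [NormedAddCommGroup V] [InnerProductSpace ℝ V]

def hPolyhedron (t : Finset (V × ℝ)) : Set V := {x | ∀ p ∈ t, ⟪p.1, x⟫ ≤ p.2}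

def IsHPolyhedron (S : Set V) : Prop := ∃ t : Finset (V × ℝ), S = hPolyhedron t

def IsConvexPolytope (P : Set V) : Prop :=
  ∃ s : Finset V, s.Nonempty ∧ P = convexHull ℝ (s : Set V)

lemma hPolyhedron_eq_biInter (t : Finset (V × ℝ)) :
    hPolyhedron t = ⋂ p ∈ t, {x | ⟪p.1, x⟫ ≤ p.2} := by
  ext x
  simp [hPolyhedron]

lemma convex_hPolyhedron (t : Finset (V × ℝ)) : Convex ℝ (hPolyhedron t) := by
  rw [hPolyhedron_eq_biInter]
  exact convex_iInter₂ fun p _ => convex_halfSpace_le (innerSL ℝ p.1).isLinear p.2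

lemma isClosed_hPolyhedron (t : Finset (V × ℝ)) : IsClosed (hPolyhedron t) := by
  rw [hPolyhedron_eq_biInter]
  exact isClosed_biInter fun p _ => isClosed_le (innerSL ℝ p.1).continuous continuous_const

lemma hPolyhedron_union (t t' : Finset (V × ℝ)) :
    hPolyhedron (t ∪ t') = hPolyhedron t ∩ hPolyhedron t' := by
  ext x
  simp [hPolyhedron, or_imp, forall_and]

lemma IsHPolyhedron.inter {S S' : Set V} (hS : IsHPolyhedron S) (hS' : IsHPolyhedron S') :
    IsHPolyhedron (S ∩ S') := by
  obtain ⟨t, rfl⟩ := hS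
  obtain ⟨t', rfl⟩ := hS'
  exact ⟨t ∪ t', (hPolyhedron_union t t').symm⟩

lemma isHPolyhedron_biInter {ι : Type*} (s : Finset ι) {A : ι → Set V}
    (hA : ∀ i ∈ s, IsHPolyhedron (A i)) : IsHPolyhedron (⋂ i ∈ s, A i) := by
  induction s using Finset.induction_on with
  | empty => exact ⟨∅, by ext; simp [hPolyhedron]⟩
  | insert i s _ IH =>
    rw [Finset.set_biInter_insert]
    exact (hA i (Finset.mem_insert_self i s)).inter
      (IH fun j hj => hA j (Finset.mem_insert_of_mem hj))

lemma IsHPolyhedron.vadd {S : Set V} (hS : IsHPolyhedron S) (a : V) :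
    IsHPolyhedron (a +ᵥ S) := by
  obtain ⟨t, rfl⟩ := hS
  refine ⟨t.image fun p => (p.1, p.2 + ⟪p.1, a⟫), ?_⟩
  ext x
  simp only [Set.mem_vadd_set_iff_neg_vadd_mem, hPolyhedron, Finset.forall_mem_image, vadd_eq_add]
  refine forall₂_congr fun p _ => ?_
  rw [inner_add_right, inner_neg_right]
  constructor <;> intro h <;> linarith

lemma isHPolyhedron_orthogonal_singleton (u : V) : IsHPolyhedron ((ℝ ∙ u)ᗮ : Set V) := by
  refine ⟨{(u, 0), (-u, 0)}, ?_⟩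
  ext x
  simp [hPolyhedron, Submodule.mem_orthogonal_singleton_iff_inner_right, le_antisymm_iff]

lemma IsHPolyhedron.image_subtype {K : Submodule ℝ V} (hK : IsHPolyhedron (K : Set V))
    {Q : Set K} (hQ : IsHPolyhedron Q) : IsHPolyhedron (K.subtype '' Q) := by
  obtain ⟨t, rfl⟩ := hQ
  convert hK.inter ⟨t.image fun q => ((q.1 : V), q.2), rfl⟩ using 1
  ext x
  simp only [hPolyhedron, Set.mem_image, Set.mem_inter_iff, Finset.forall_mem_image,
    SetLike.mem_coe, Submodule.subtype_apply]
  constructor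
  · rintro ⟨y, hy, rfl⟩
    exact ⟨y.2, hy⟩
  · rintro ⟨hxK, hx⟩
    exact ⟨⟨x, hxK⟩, hx, rfl⟩

lemma IsConvexPolytope.convex {P : Set V} (hP : IsConvexPolytope P) : Convex ℝ P := by
  obtain ⟨s, -, rfl⟩ := hP
  exact convex_convexHull ℝ _

lemma IsConvexPolytope.isCompact {P : Set V} (hP : IsConvexPolytope P) : IsCompact P := by
  obtain ⟨s, -, rfl⟩ := hP
  exact s.finite_toSet.isCompact_convexHull ℝ

lemma IsConvexPolytope.vadd {P : Set V} (hP : IsConvexPolytope P) (a : V) :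
    IsConvexPolytope (a +ᵥ P) := by
  obtain ⟨s, hs, rfl⟩ := hP
  refine ⟨s.image (a +ᵥ ·), hs.image _, ?_⟩
  rw [Finset.coe_image, Set.image_vadd, convexHull_vadd]

lemma IsConvexPolytope.preimage_subtype {K : Submodule ℝ V} {P : Set V}
    (hP : IsConvexPolytope P) (hPK : P ⊆ K) : IsConvexPolytope (K.subtype ⁻¹' P) := by
  obtain ⟨s, ⟨x, hx⟩, rfl⟩ := hP
  have hsK : (s : Set V) ⊆ K := (subset_convexHull ℝ _).trans hPK
  refine ⟨s.subtype (· ∈ K), ⟨⟨x, hsK hx⟩, Finset.mem_subtype.2 hx⟩, ?_⟩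
  apply K.injective_subtype.image_injective
  rw [Set.image_preimage_eq_of_subset (by simpa using hPK), LinearMap.image_convexHull]
  congr 1
  ext y
  simpa using fun hy => hsK hy

/-- For small `ε > 0` both `x + ε • (x - y)` and `x - ε • (x - y)` lie in the polyhedron, and `x`
is their midpoint. -/
lemma eq_of_mem_extremePoints_of_active {t : Finset (V × ℝ)} {x y : V}
    (hx : x ∈ (hPolyhedron t).extremePoints ℝ) (hy : y ∈ hPolyhedron t)
    (hxy : ∀ p ∈ t, ⟪p.1, x⟫ = p.2 → ⟪p.1, y⟫ = p.2) : x = y := by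
  have hev : ∀ᶠ ε : ℝ in 𝓝 0, x + ε • (x - y) ∈ hPolyhedron t := by
    simp only [hPolyhedron]
    refine (eventually_all_finset t).2 fun p hp => ?_
    rcases (hx.1 p hp).eq_or_lt with hact | hlt
    · refine Eventually.of_forall fun ε => ?_
      simp [inner_add_right, inner_sub_right, inner_smul_right, hact, hxy p hp hact]
    · have hcont : Continuous fun ε : ℝ => ⟪p.1, x + ε • (x - y)⟫ := by fun_prop
      exact (hcont.tendsto' 0 _ (by simp)).eventually (eventually_lt_nhds hlt) |>.mono
        fun _ => le_of_lt
  obtain ⟨ε, hz, hε0, hε1⟩ :=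
    ((hev.filter_mono nhdsWithin_le_nhds).and (Ioo_mem_nhdsGT one_pos)).exists
  have hw : (1 - ε) • x + ε • y ∈ hPolyhedron t :=
    convex_hPolyhedron t hx.1 hy (by linarith) hε0.le (by ring)
  have hseg : x ∈ openSegment ℝ (x + ε • (x - y)) ((1 - ε) • x + ε • y) :=
    ⟨1 / 2, 1 / 2, by norm_num, by norm_num, by norm_num, by module⟩
  have h := hx.2 hz hw hseg
  rw [add_eq_left, smul_eq_zero, sub_eq_zero] at h
  exact h.resolve_left hε0.ne'

lemma finite_extremePoints_hPolyhedron (t : Finset (V × ℝ)) :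
    ((hPolyhedron t).extremePoints ℝ).Finite := by
  let active : V → Finset (V × ℝ) := fun x => t.filter fun p => ⟪p.1, x⟫ = p.2
  refine Set.Finite.of_finite_image (f := active) (t.powerset.finite_toSet.subset ?_) ?_
  · rintro _ ⟨x, -, rfl⟩
    exact Finset.mem_powerset.2 (Finset.filter_subset _ _)
  · intro x hx y hy hxy
    refine eq_of_mem_extremePoints_of_active hx hy.1 fun p hp hpx => ?_
    have hpy : p ∈ active y := hxy ▸ Finset.mem_filter.2 ⟨hp, hpx⟩
    exact (Finset.mem_filter.1 hpy).2

def polar (S : Set V) : Set V := {u | ∀ x ∈ S, ⟪u, x⟫ ≤ 1}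

lemma polar_convexHull (s : Finset V) :
    polar (convexHull ℝ (s : Set V)) = hPolyhedron (s.image fun v => (v, 1)) := by
  ext u
  simp only [polar, hPolyhedron, Finset.forall_mem_image]
  refine ⟨fun h v hv => real_inner_comm u v ▸ h v (subset_convexHull ℝ _ hv), fun h x hx => ?_⟩
  refine convexHull_min (fun v hv => ?_) (convex_halfSpace_le (innerSL ℝ u).isLinear 1) hx
  change ⟪u, v⟫ ≤ 1
  exact real_inner_comm u v ▸ h hv

lemma isBounded_polar_of_zero_mem_interior {S : Set V} (h0 : (0 : V) ∈ interior S) :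
    Bornology.IsBounded (polar S) := by
  obtain ⟨r, hr, hball⟩ := Metric.mem_nhds_iff.1 (mem_interior_iff_mem_nhds.1 h0)
  refine (Metric.isBounded_closedBall (x := (0 : V)) (r := 2 / r)).subset fun u hu => ?_
  rw [Metric.mem_closedBall, dist_zero_right, le_div_iff₀ hr]
  rcases eq_or_ne u 0 with rfl | hu0
  · simp
  have hnu : 0 < ‖u‖ := norm_pos_iff.2 hu0
  have hx : (r / (2 * ‖u‖)) • u ∈ S := hball <| by
    rw [Metric.mem_ball, dist_zero_right, norm_smul, Real.norm_of_nonneg (by positivity)]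
    field_simp
    linarith
  have hux := hu _ hx
  rw [real_inner_smul_right, real_inner_self_eq_norm_sq] at hux
  have hsimp : r / (2 * ‖u‖) * ‖u‖ ^ 2 = ‖u‖ * r / 2 := by field_simp
  linarith

variable [FiniteDimensional ℝ V]

lemma polar_polar {S : Set V} (hconv : Convex ℝ S) (hcl : IsClosed S) (h0 : (0 : V) ∈ S) :
    polar (polar S) = S := by
  refine Set.Subset.antisymm (fun x hx => ?_) fun x hx u hu => real_inner_comm u x ▸ hu x hx
  by_contra hxS
  obtain ⟨f, c, hfS, hfx⟩ := geometric_hahn_banach_closed_point hconv hcl hxS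
  have hc : 0 < c := by simpa using hfS 0 h0
  let w := (InnerProductSpace.toDual ℝ V).symm f
  have hw : ∀ y, ⟪w, y⟫ = f y := fun y => InnerProductSpace.toDual_symm_apply
  have hmem : c⁻¹ • w ∈ polar S := fun y hy => by
    rw [real_inner_smul_left, hw, inv_mul_le_one₀ hc]
    exact (hfS y hy).le
  have hxw := hx _ hmem
  rw [real_inner_comm, real_inner_smul_left, hw, inv_mul_le_one₀ hc] at hxw
  linarith

theorem isConvexPolytope_hPolyhedron {t : Finset (V × ℝ)} (hne : (hPolyhedron t).Nonempty)
    (hbd : Bornology.IsBounded (hPolyhedron t)) : IsConvexPolytope (hPolyhedron t) := by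
  have hK : IsCompact (hPolyhedron t) :=
    Metric.isCompact_of_isClosed_isBounded (isClosed_hPolyhedron t) hbd
  have hE := finite_extremePoints_hPolyhedron t
  refine ⟨hE.toFinset, by simpa using hK.extremePoints_nonempty hne, ?_⟩
  rw [hE.coe_toFinset, ← (hE.isCompact_convexHull ℝ).isClosed.closure_eq,
    closure_convexHull_extremePoints hK (convex_hPolyhedron t)]

lemma IsConvexPolytope.isHPolyhedron_of_zero_mem_interior {P : Set V}
    (hP : IsConvexPolytope P) (h0 : (0 : V) ∈ interior P) : IsHPolyhedron P := by
  obtain ⟨s, -, rfl⟩ := hP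
  have hbd := isBounded_polar_of_zero_mem_interior h0
  rw [polar_convexHull] at hbd
  obtain ⟨s', -, hs'⟩ := isConvexPolytope_hPolyhedron ⟨0, by simp [hPolyhedron]⟩ hbd
  refine ⟨s'.image fun v => (v, 1), ?_⟩
  rw [← polar_convexHull, ← hs', ← polar_convexHull, polar_polar (convex_convexHull ℝ _)
    (s.finite_toSet.isCompact_convexHull ℝ).isClosed (interior_subset h0)]

lemma exists_ne_zero_convexHull_subset_orthogonal {s : Set V} (hs : (0 : V) ∈ s)
    (hint : interior (convexHull ℝ s) = ∅) : ∃ u : V, u ≠ 0 ∧ convexHull ℝ s ⊆ (ℝ ∙ u)ᗮ := by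
  have hspan : vectorSpan ℝ s ≠ ⊤ := by
    rw [Ne, ← AffineSubspace.affineSpan_eq_top_iff_vectorSpan_eq_top_of_nonempty ℝ V V ⟨0, hs⟩,
      ← interior_convexHull_nonempty_iff_affineSpan_eq_top, hint]
    exact Set.not_nonempty_empty
  obtain ⟨u, hu, hu0⟩ := Submodule.exists_mem_ne_zero_of_ne_bot
    (mt Submodule.orthogonal_eq_bot_iff.1 hspan)
  refine ⟨u, hu0, convexHull_min (fun x hx => ?_) (Submodule.convex _)⟩
  rw [SetLike.mem_coe, Submodule.mem_orthogonal_singleton_iff_inner_right, real_inner_comm]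
  exact (Submodule.mem_orthogonal _ u).1 hu x (by simpa using vsub_mem_vectorSpan ℝ hx hs)

/-- Either `P` has an interior point, and polarity reduces the claim to
`isConvexPolytope_hPolyhedron`, or a translate of `P` lies in a hyperplane `(ℝ ∙ u)ᗮ`, where
induction on the dimension applies. -/
theorem IsConvexPolytope.isHPolyhedron {P : Set V} (hP : IsConvexPolytope P) :
    IsHPolyhedron P := by
  induction h : Module.finrank ℝ V using Nat.strong_induction_on generalizing V with
  | _ d IH =>
  obtain ⟨s, hs, rfl⟩ := hP
  rcases (interior (convexHull ℝ (s : Set V))).eq_empty_or_nonempty with hint | ⟨x, hx⟩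
  · obtain ⟨x₀, hx₀⟩ := hs
    suffices IsHPolyhedron (-x₀ +ᵥ convexHull ℝ (s : Set V)) by
      simpa using this.vadd x₀
    obtain ⟨u, hu0, hsub⟩ := exists_ne_zero_convexHull_subset_orthogonal
      (s := -x₀ +ᵥ (s : Set V)) ⟨x₀, hx₀, neg_add_cancel x₀⟩
      (by rw [convexHull_vadd, interior_vadd, hint, Set.vadd_set_empty])
    rw [← convexHull_vadd, ← Set.image_preimage_eq_of_subset (f := (ℝ ∙ u)ᗮ.subtype)
      (s := convexHull ℝ _) (by simpa using hsub)]
    refine (isHPolyhedron_orthogonal_singleton u).image_subtype (IH _ ?_ ?_ rfl)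
    · have hdim := Submodule.finrank_add_finrank_orthogonal (ℝ ∙ u)
      rw [finrank_span_singleton hu0] at hdim
      omega
    · refine IsConvexPolytope.preimage_subtype
        ⟨s.image (-x₀ +ᵥ ·), ⟨_, Finset.mem_image_of_mem _ hx₀⟩, ?_⟩ hsub
      rw [Finset.coe_image, Set.image_vadd]
  · have h0 : (0 : V) ∈ interior (-x +ᵥ convexHull ℝ (s : Set V)) := by
      rw [interior_vadd]
      exact ⟨x, hx, neg_add_cancel x⟩
    simpa using ((IsConvexPolytope.vadd ⟨s, hs, rfl⟩ (-x)).isHPolyhedron_of_zero_mem_interior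
      h0).vadd x

end Polytope

section Arrangement

variable {V : Type} [NormedAddCommGroup V] [InnerProductSpace ℝ V]

def side (p : V × ℝ) : SignType → Set V
  | .zero => {x | ⟪p.1, x⟫ = p.2}
  | .neg => {x | ⟪p.1, x⟫ ≤ p.2}
  | .pos => {x | p.2 ≤ ⟪p.1, x⟫}

lemma mem_side_iff {p : V × ℝ} {σ : SignType} {x : V} :
    x ∈ side p σ ↔ SignType.sign (⟪p.1, x⟫ - p.2) = 0 ∨ SignType.sign (⟪p.1, x⟫ - p.2) = σ := by
  cases σ <;> simp [side, sub_eq_zero, le_iff_eq_or_lt, eq_comm (a := p.2), sign_eq_neg_one_iff,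
    sign_eq_one_iff]

lemma side_zero_subset (p : V × ℝ) (σ : SignType) : side p 0 ⊆ side p σ := fun _ hx =>
  mem_side_iff.2 (.inl ((mem_side_iff.1 hx).elim id id))

lemma eq_of_mem_side {p : V × ℝ} {σ σ' : SignType} {x : V} (hx : x ∈ side p σ)
    (hx' : x ∈ side p σ') (hx0 : x ∉ side p 0) : σ = σ' := by
  simp only [mem_side_iff, or_self] at hx hx' hx0
  exact (hx.resolve_left hx0).symm.trans (hx'.resolve_left hx0)

lemma side_one_inter_side_neg_one (p : V × ℝ) : side p 1 ∩ side p (-1) = side p 0 := by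
  ext x
  exact ⟨fun h => le_antisymm h.2 h.1, fun h => ⟨h.ge, h.le⟩⟩

lemma convex_side (p : V × ℝ) (σ : SignType) : Convex ℝ (side p σ) := by
  cases σ
  · exact convex_hyperplane (innerSL ℝ p.1).isLinear p.2
  · exact convex_halfSpace_le (innerSL ℝ p.1).isLinear p.2
  · exact convex_halfSpace_ge (innerSL ℝ p.1).isLinear p.2

lemma isHPolyhedron_side (p : V × ℝ) (σ : SignType) : IsHPolyhedron (side p σ) := by
  cases σ
  · refine ⟨{p, (-p.1, -p.2)}, ?_⟩
    ext x
    simp [side, hPolyhedron, le_antisymm_iff]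
  · exact ⟨{p}, by ext x; simp [side, hPolyhedron]⟩
  · exact ⟨{(-p.1, -p.2)}, by ext x; simp [side, hPolyhedron]⟩

lemma ind_eq_sides (S : Set V) (p : V × ℝ) :
    ind S = ind (S ∩ side p 1) + ind (S ∩ side p (-1)) - ind (S ∩ side p 0) := by
  have hunion : S ∩ side p 1 ∪ S ∩ side p (-1) = S := by
    rw [← Set.inter_union_distrib_left, Set.inter_eq_left]
    exact fun x _ => le_total p.2 ⟪p.1, x⟫
  rw [ind, ← Set.indicator_union_add_inter, hunion, ← Set.inter_inter_distrib_left,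
    side_one_inter_side_neg_one, add_sub_cancel_right]

def cell (C : Set ((V × ℝ) × SignType)) : Set V := ⋂ q ∈ C, side q.1 q.2

lemma convex_cell (C : Set ((V × ℝ) × SignType)) : Convex ℝ (cell C) :=
  convex_iInter₂ fun q _ => convex_side q.1 q.2

lemma cell_union (C C' : Set ((V × ℝ) × SignType)) : cell (C ∪ C') = cell C ∩ cell C' :=
  Set.biInter_union C C' _

lemma side_inter_cell (p : V × ℝ) (σ : SignType) (C : Set ((V × ℝ) × SignType)) :
    side p σ ∩ cell C = cell (insert (p, σ) C) := by
  simp [cell]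

lemma hPolyhedron_eq_cell (t : Finset (V × ℝ)) :
    hPolyhedron t = cell ((fun p => (p, -1)) '' t) := by
  ext x
  simp only [hPolyhedron, cell, Set.mem_iInter₂, Set.forall_mem_image]
  rfl

lemma exists_mem_forall_notMem_side_zero {S : Set V} (hS : Convex ℝ S) (hne : S.Nonempty)
    (F : Finset (V × ℝ)) (hF : ∀ p ∈ F, ¬S ⊆ side p 0) : ∃ x ∈ S, ∀ p ∈ F, x ∉ side p 0 := by
  induction F using Finset.induction_on with
  | empty =>
    obtain ⟨x, hx⟩ := hne
    exact ⟨x, hx, by simp⟩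
  | insert q F _ IH =>
  obtain ⟨x, hxS, hxF⟩ := IH fun p hp => hF p (Finset.mem_insert_of_mem hp)
  by_cases hxq : x ∉ side q 0
  · exact ⟨x, hxS, Finset.forall_mem_insert _ _ _ |>.2 ⟨hxq, hxF⟩⟩
  obtain ⟨y, hyS, hyq⟩ := Set.not_subset.1 (hF q (Finset.mem_insert_self q F))
  have hev : ∀ᶠ t : ℝ in 𝓝 0, ∀ p ∈ F, x + t • (y - x) ∉ side p 0 := by
    refine (eventually_all_finset F).2 fun p hp => ?_
    have hcont : Continuous fun t : ℝ => ⟪p.1, x + t • (y - x)⟫ := by fun_prop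
    exact (hcont.tendsto' 0 _ (by simp)).eventually_ne (hxF p hp)
  obtain ⟨t, hF', ht0, ht1⟩ :=
    ((hev.filter_mono nhdsWithin_le_nhds).and (Ioo_mem_nhdsGT one_pos)).exists
  refine ⟨x + t • (y - x), hS.add_smul_sub_mem hxS hyS ⟨ht0.le, ht1.le⟩,
    Finset.forall_mem_insert _ _ _ |>.2 ⟨fun hq => hyq ?_, hF'⟩⟩
  have hxq' : ⟪q.1, x⟫ = q.2 := not_not.1 hxq
  change ⟪q.1, x + t • (y - x)⟫ = q.2 at hq
  change ⟪q.1, y⟫ = q.2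
  rw [inner_add_right, inner_smul_right, inner_sub_right, hxq', add_eq_left] at hq
  have hyq' := (mul_eq_zero.1 hq).resolve_left ht0.ne'
  linarith

lemma cell_subset_cell {C C' : Set ((V × ℝ) × SignType)} {x : V} (hx : x ∈ cell C)
    (hgen : ∀ p ∈ Prod.fst '' C, ¬cell C ⊆ side p 0 → x ∉ side p 0) (hx' : x ∈ cell C')
    (hC : Prod.fst '' C' ⊆ Prod.fst '' C) : cell C ⊆ cell C' := by
  intro y hy
  simp only [cell, Set.mem_iInter₂] at hx hx' ⊢
  intro q hq
  by_cases h0 : cell C ⊆ side q.1 0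
  · exact side_zero_subset q.1 _ (h0 hy)
  obtain ⟨q', hq', hqq'⟩ := hC ⟨q, hq, rfl⟩
  have hσ := eq_of_mem_side (hqq' ▸ hx q' hq') (hx' q hq) (hgen _ ⟨q', hq', hqq'⟩ h0)
  exact hσ ▸ hqq' ▸ Set.mem_iInter₂.1 hy q' hq'

/-- Evaluate at a point of an inclusion-maximal nonempty cell that avoids every hyperplane not
containing that cell: by `cell_subset_cell` no other cell of the combination contains it. -/
lemma eq_empty_of_linearCombination_ind_eq_zero (H : Set (V × ℝ)) (hH : H.Finite)
    {c : Set V →₀ ℝ} (hc : ∀ S ∈ c.support, ∃ C, S = cell C ∧ Prod.fst '' C = H)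
    (h0 : Finsupp.linearCombination ℝ ind c = 0) : ∀ S ∈ c.support, S = ∅ := by
  by_contra! hne
  obtain ⟨S, hSmax⟩ := (c.support.filter Set.Nonempty).exists_maximal
    (by simpa [Finset.filter_nonempty_iff, Set.nonempty_iff_ne_empty] using hne)
  obtain ⟨hS, hSne⟩ := Finset.mem_filter.1 hSmax.1
  obtain ⟨C, rfl, hCH⟩ := hc _ hS
  obtain ⟨x, hxS, hx⟩ := exists_mem_forall_notMem_side_zero (convex_cell C) hSne
    (hH.toFinset.filter fun p => ¬cell C ⊆ side p 0) (by simp)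
  have hval := congr_fun h0 x
  rw [Finsupp.linearCombination_apply, Finsupp.sum, Finset.sum_apply,
    Finset.sum_eq_single (cell C)] at hval
  · exact Finsupp.mem_support_iff.1 hS (by simpa [hxS] using hval)
  · intro S' hS' hne'
    by_cases hxS' : x ∈ S'
    · obtain ⟨C', rfl, hC'H⟩ := hc _ hS'
      have hsub := cell_subset_cell hxS
        (fun p hp h => hx p (by simpa [h] using hCH ▸ hp)) hxS' (hC'H.trans hCH.symm).le
      exact (hne' (hSmax.2 (Finset.mem_filter.2 ⟨hS', ⟨x, hxS'⟩⟩) hsub |>.antisymm hsub)).elim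
    · simp [hxS']
  · exact fun h => (h hS).elim

end Arrangement

section Cutting

variable {V : Type} [NormedAddCommGroup V] [InnerProductSpace ℝ V]

def cut (p : V × ℝ) (c : Set V →₀ ℝ) : Set V →₀ ℝ :=
  c.mapDomain (· ∩ side p 1) + c.mapDomain (· ∩ side p (-1)) - c.mapDomain (· ∩ side p 0)

def cutAll : List (V × ℝ) → (Set V →₀ ℝ) → (Set V →₀ ℝ)
  | [], c => c
  | p :: l, c => cutAll l (cut p c)

lemma linearCombination_cut {M : Type*} [AddCommGroup M] [Module ℝ M] {g : Set V → M}
    {p : V × ℝ} {c : Set V →₀ ℝ}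
    (hg : ∀ S ∈ c.support, g S = g (S ∩ side p 1) + g (S ∩ side p (-1)) - g (S ∩ side p 0)) :
    Finsupp.linearCombination ℝ g (cut p c) = Finsupp.linearCombination ℝ g c := by
  simp only [cut, map_add, map_sub, Finsupp.linearCombination_mapDomain]
  simp only [Finsupp.linearCombination_apply, Finsupp.sum, ← Finset.sum_add_distrib,
    ← Finset.sum_sub_distrib]
  refine Finset.sum_congr rfl fun S hS => ?_
  rw [hg S hS, smul_sub, smul_add]
  rfl

lemma exists_eq_inter_side_of_mem_support_cut {p : V × ℝ} {c : Set V →₀ ℝ} {S : Set V}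
    (hS : S ∈ (cut p c).support) : ∃ S₀ ∈ c.support, ∃ σ, S = S₀ ∩ side p σ := by
  have hmap : ∀ σ, S ∈ (c.mapDomain (· ∩ side p σ)).support →
      ∃ S₀ ∈ c.support, ∃ σ, S = S₀ ∩ side p σ := fun σ h => by
    obtain ⟨S₀, hS₀, rfl⟩ := Finset.mem_image.1 (Finsupp.mapDomain_support h)
    exact ⟨S₀, hS₀, σ, rfl⟩
  rcases Finset.mem_union.1 (Finsupp.support_sub hS) with h | h
  · exact (Finset.mem_union.1 (Finsupp.support_add h)).elim (hmap 1) (hmap (-1))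
  · exact hmap 0 h

lemma linearCombination_cutAll {M : Type*} [AddCommGroup M] [Module ℝ M] {g : Set V → M}
    {𝒞 : Set (Set V)} (h𝒞 : ∀ S ∈ 𝒞, ∀ p σ, S ∩ side p σ ∈ 𝒞)
    (hg : ∀ S ∈ 𝒞, ∀ p, g S = g (S ∩ side p 1) + g (S ∩ side p (-1)) - g (S ∩ side p 0))
    (l : List (V × ℝ)) {c : Set V →₀ ℝ} (hc : ∀ S ∈ c.support, S ∈ 𝒞) :
    Finsupp.linearCombination ℝ g (cutAll l c) = Finsupp.linearCombination ℝ g c := by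
  induction l generalizing c with
  | nil => rfl
  | cons p l IH =>
    rw [cutAll, IH, linearCombination_cut fun S hS => hg S (hc S hS) p]
    intro S hS
    obtain ⟨S₀, hS₀, σ, rfl⟩ := exists_eq_inter_side_of_mem_support_cut hS
    exact h𝒞 S₀ (hc S₀ hS₀) p σ

lemma exists_eq_inter_cell_of_mem_support_cutAll (l : List (V × ℝ)) {c : Set V →₀ ℝ}
    {S : Set V} (hS : S ∈ (cutAll l c).support) :
    ∃ S₀ ∈ c.support, ∃ C, S = S₀ ∩ cell C ∧ Prod.fst '' C = {p | p ∈ l} := by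
  induction l generalizing c with
  | nil => exact ⟨S, hS, ∅, by simp [cell], by simp⟩
  | cons p l IH =>
    obtain ⟨S₁, hS₁, C, rfl, hC⟩ := IH hS
    obtain ⟨S₀, hS₀, σ, rfl⟩ := exists_eq_inter_side_of_mem_support_cut hS₁
    refine ⟨S₀, hS₀, insert (p, σ) C, by rw [Set.inter_assoc, side_inter_cell], ?_⟩
    rw [Set.image_insert_eq, hC]
    ext q
    simp

end Cutting

section InclusionExclusion

variable {α ι : Type*}

def inclusionExclusion (s : Finset ι) (A : ι → Set α) : Set α →₀ ℝ :=
  ∑ t ∈ s.powerset with t.Nonempty, Finsupp.single (⋂ i ∈ t, A i) ((-1) ^ (t.card + 1))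

lemma linearCombination_inclusionExclusion {M : Type*} [AddCommGroup M] [Module ℝ M]
    (g : Set α → M) (s : Finset ι) (A : ι → Set α) :
    Finsupp.linearCombination ℝ g (inclusionExclusion s A) =
      ∑ t ∈ s.powerset with t.Nonempty, (-1 : ℝ) ^ (t.card + 1) • g (⋂ i ∈ t, A i) := by
  simp [inclusionExclusion, map_sum]

lemma linearCombination_ind_inclusionExclusion (s : Finset ι) (A : ι → Set α) :
    Finsupp.linearCombination ℝ ind (inclusionExclusion s A) = ind (⋃ i ∈ s, A i) := by
  ext x
  rw [linearCombination_inclusionExclusion, ind, Finset.indicator_biUnion_eq_sum_powerset,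
    Finset.sum_apply]
  refine Finset.sum_congr rfl fun t _ => ?_
  simp [zsmul_eq_mul]

end InclusionExclusion

section Valuation

variable {V : Type} [NormedAddCommGroup V] [InnerProductSpace ℝ V]

def WeaklyAdditive (φ : Set V → ℝ) : Prop :=
  ∀ P : Set V, IsConvexPolytope P → ∀ (u : V) (c : ℝ), u ≠ 0 →
    (P ∩ {x | ⟪u, x⟫ = c}).Nonempty →
    φ P = φ (P ∩ {x | c ≤ ⟪u, x⟫}) + φ (P ∩ {x | ⟪u, x⟫ ≤ c}) - φ (P ∩ {x | ⟪u, x⟫ = c})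

/-- By Minkowski–Weyl, these are the convex polytopes and `∅`. -/
def IsHPolytope (S : Set V) : Prop := IsHPolyhedron S ∧ Bornology.IsBounded S

lemma IsHPolytope.inter {S S' : Set V} (hS : IsHPolytope S) (hS' : IsHPolyhedron S') :
    IsHPolytope (S ∩ S') :=
  ⟨hS.1.inter hS', hS.2.subset Set.inter_subset_left⟩

lemma isHPolytope_biInter {ι : Type*} {s : Finset ι} (hs : s.Nonempty) {A : ι → Set V}
    (hA : ∀ i ∈ s, IsHPolytope (A i)) : IsHPolytope (⋂ i ∈ s, A i) := by
  obtain ⟨i, hi⟩ := hs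
  exact ⟨isHPolyhedron_biInter s fun j hj => (hA j hj).1,
    (hA i hi).2.subset (Set.biInter_subset_of_mem hi)⟩

lemma inclusionExclusion_mem_supported {ι : Type*} {s : Finset ι} {A : ι → Set V}
    (hA : ∀ i ∈ s, IsHPolytope (A i)) :
    inclusionExclusion s A ∈ Finsupp.supported ℝ ℝ {S | IsHPolytope S} :=
  Submodule.sum_mem _ fun t ht => Finsupp.single_mem_supported ℝ _ <| by
    obtain ⟨hts, htne⟩ := Finset.mem_filter.1 ht
    exact isHPolytope_biInter htne fun i hi => hA i (Finset.mem_powerset.1 hts hi)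

lemma subset_side_of_inter_side_zero_eq_empty {S : Set V} (hS : IsPreconnected S)
    {p : V × ℝ} (h : S ∩ side p 0 = ∅) : S ⊆ side p 1 ∨ S ⊆ side p (-1) := by
  by_contra! hsub
  obtain ⟨⟨x, hxS, hx⟩, ⟨y, hyS, hy⟩⟩ := Set.not_subset.1 hsub.1, Set.not_subset.1 hsub.2
  have hcont : ContinuousOn (fun z => ⟪p.1, z⟫) S := by fun_prop
  obtain ⟨z, hzS, hz⟩ := hS.intermediate_value hxS hyS hcont
    ⟨(not_le.1 (hx : ¬p.2 ≤ ⟪p.1, x⟫)).le, (not_le.1 (hy : ¬⟪p.1, y⟫ ≤ p.2)).le⟩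
  exact h.subset ⟨hzS, hz⟩

variable [FiniteDimensional ℝ V] {φ : Set V → ℝ}

lemma IsConvexPolytope.isHPolytope {P : Set V} (hP : IsConvexPolytope P) : IsHPolytope P :=
  ⟨hP.isHPolyhedron, hP.isCompact.isBounded⟩

lemma IsHPolytope.isConvexPolytope {S : Set V} (hS : IsHPolytope S) (hne : S.Nonempty) :
    IsConvexPolytope S := by
  obtain ⟨⟨t, rfl⟩, hbd⟩ := hS
  exact isConvexPolytope_hPolyhedron hne hbd

/-- A polytope missing the hyperplane lies on one side of it, and a hyperplane with normal `0`
is `∅` or everything. -/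
lemma WeaklyAdditive.apply_eq_sides (hφ : WeaklyAdditive φ) (hempty : φ ∅ = 0) {S : Set V}
    (hS : IsHPolytope S) (p : V × ℝ) :
    φ S = φ (S ∩ side p 1) + φ (S ∩ side p (-1)) - φ (S ∩ side p 0) := by
  rcases S.eq_empty_or_nonempty with rfl | hne
  · simp [hempty]
  have hP := hS.isConvexPolytope hne
  rcases (S ∩ side p 0).eq_empty_or_nonempty with h0 | h0
  · have h10 : S ∩ side p 1 ∩ side p (-1) = ∅ := by
      rw [Set.inter_assoc, side_one_inter_side_neg_one, h0]
    rcases subset_side_of_inter_side_zero_eq_empty hP.convex.isPreconnected h0 with h | h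
    · rw [Set.inter_eq_left.2 h] at h10 ⊢
      rw [h10, h0, hempty, add_zero, sub_zero]
    · rw [Set.inter_right_comm, Set.inter_eq_left.2 h] at h10
      rw [Set.inter_eq_left.2 h, h10, h0, hempty, zero_add, sub_zero]
  rcases eq_or_ne p.1 0 with hu | hu
  · obtain ⟨x, -, hx⟩ := h0
    have hside : ∀ σ, side p σ = Set.univ := by
      have hc : p.2 = 0 := by simpa [side, hu] using hx.symm
      intro σ
      cases σ <;> simp [side, hu, hc]
    simp [hside]
  · exact hφ S hP p.1 p.2 hu h0

theorem WeaklyAdditive.linearCombination_eq_zero (hφ : WeaklyAdditive φ) (hempty : φ ∅ = 0)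
    {c : Set V →₀ ℝ} (hc : c ∈ Finsupp.supported ℝ ℝ {S | IsHPolytope S})
    (h0 : Finsupp.linearCombination ℝ ind c = 0) : Finsupp.linearCombination ℝ φ c = 0 := by
  have hc' : ∀ S ∈ c.support, IsHPolytope S := fun S hS => (Finsupp.mem_supported ℝ c).1 hc hS
  have hT : ∀ S, ∃ t : Finset (V × ℝ), S ∈ c.support → S = hPolyhedron t := fun S => by
    by_cases hS : S ∈ c.support
    · obtain ⟨t, ht⟩ := (hc' S hS).1
      exact ⟨t, fun _ => ht⟩
    · exact ⟨∅, fun h => (hS h).elim⟩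
  choose T hT using hT
  set H := c.support.biUnion T
  have hcells : ∀ S ∈ (cutAll H.toList c).support, ∃ C, S = cell C ∧ Prod.fst '' C = H := by
    intro S hS
    obtain ⟨S₀, hS₀, C, rfl, hC⟩ := exists_eq_inter_cell_of_mem_support_cutAll _ hS
    refine ⟨(fun p => (p, -1)) '' T S₀ ∪ C,
      by rw [cell_union, ← hPolyhedron_eq_cell, ← hT S₀ hS₀], ?_⟩
    rw [Set.image_union, hC, Set.image_image, Set.image_id']
    ext p
    simp only [Set.mem_union, Finset.mem_coe, Set.mem_ofPred_eq, Finset.mem_toList]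
    exact or_iff_right_of_imp fun h => Finset.mem_biUnion.2 ⟨S₀, hS₀, h⟩
  have hind := linearCombination_cutAll (𝒞 := Set.univ) (g := ind) (by simp)
    (fun S _ p => ind_eq_sides S p) H.toList (c := c) (by simp)
  have hφc := linearCombination_cutAll (𝒞 := {S | IsHPolytope S}) (g := φ)
    (fun S hS p σ => hS.inter (isHPolyhedron_side p σ))
    (fun S hS p => hφ.apply_eq_sides hempty hS p) H.toList hc'
  rw [← hφc, Finsupp.linearCombination_apply, Finsupp.sum]
  refine Finset.sum_eq_zero fun S hS => ?_
  rw [eq_empty_of_linearCombination_ind_eq_zero H H.finite_toSet hcells (hind.trans h0) S hS,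
    hempty, smul_zero]

lemma WeaklyAdditive.linearCombination_eq_of_ind_eq (hφ : WeaklyAdditive φ)
    (hempty : φ ∅ = 0) {c c' : Set V →₀ ℝ} (hc : c ∈ Finsupp.supported ℝ ℝ {S | IsHPolytope S})
    (hc' : c' ∈ Finsupp.supported ℝ ℝ {S | IsHPolytope S})
    (h : Finsupp.linearCombination ℝ ind c = Finsupp.linearCombination ℝ ind c') :
    Finsupp.linearCombination ℝ φ c = Finsupp.linearCombination ℝ φ c' := by
  rw [← sub_eq_zero, ← map_sub]
  exact hφ.linearCombination_eq_zero hempty (Submodule.sub_mem _ hc hc')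
    (by rw [map_sub, h, sub_self])

theorem WeaklyAdditive.inclusion_exclusion (hφ : WeaklyAdditive φ) (hempty : φ ∅ = 0)
    {ι : Type*} (s : Finset ι) {A : ι → Set V} (hA : ∀ i ∈ s, IsHPolytope (A i))
    (hU : IsHPolytope (⋃ i ∈ s, A i)) :
    φ (⋃ i ∈ s, A i) =
      ∑ t ∈ s.powerset with t.Nonempty, (-1 : ℝ) ^ (t.card + 1) * φ (⋂ i ∈ t, A i) := by
  have h := hφ.linearCombination_eq_of_ind_eq hempty (Finsupp.single_mem_supported ℝ 1 hU)
    (inclusionExclusion_mem_supported hA)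
    (by rw [Finsupp.linearCombination_single, one_smul, linearCombination_ind_inclusionExclusion])
  simpa [linearCombination_inclusionExclusion] using h

/-- By `linearCombination_eq_of_ind_eq` the value does not depend on the chosen combination;
it is `0` when there is none. -/
def extension (φ : Set V → ℝ) (S : Set V) : ℝ :=
  if h : ∃ c ∈ Finsupp.supported ℝ ℝ {S | IsHPolytope S},
      Finsupp.linearCombination ℝ ind c = ind S
  then Finsupp.linearCombination ℝ φ h.choose else 0

lemma WeaklyAdditive.extension_eq (hφ : WeaklyAdditive φ) (hempty : φ ∅ = 0) {S : Set V}
    {c : Set V →₀ ℝ} (hc : c ∈ Finsupp.supported ℝ ℝ {S | IsHPolytope S})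
    (hcS : Finsupp.linearCombination ℝ ind c = ind S) :
    extension φ S = Finsupp.linearCombination ℝ φ c := by
  have h : ∃ c ∈ Finsupp.supported ℝ ℝ {S | IsHPolytope S},
      Finsupp.linearCombination ℝ ind c = ind S := ⟨c, hc, hcS⟩
  rw [extension, dif_pos h]
  exact hφ.linearCombination_eq_of_ind_eq hempty h.choose_spec.1 hc
    (h.choose_spec.2.trans hcS.symm)

lemma WeaklyAdditive.extension_biUnion (hφ : WeaklyAdditive φ) (hempty : φ ∅ = 0)
    {ι : Type*} {s : Finset ι} {A : ι → Set V} (hA : ∀ i ∈ s, IsHPolytope (A i)) :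
    extension φ (⋃ i ∈ s, A i) = Finsupp.linearCombination ℝ φ (inclusionExclusion s A) :=
  hφ.extension_eq hempty (inclusionExclusion_mem_supported hA)
    (linearCombination_ind_inclusionExclusion s A)

theorem WeaklyAdditive.extension_union_add_inter (hφ : WeaklyAdditive φ) (hempty : φ ∅ = 0)
    {F G : Finset (Set V)} (hF : ∀ A ∈ F, IsHPolytope A) (hG : ∀ B ∈ G, IsHPolytope B) :
    extension φ (⋃₀ F ∪ ⋃₀ G) + extension φ (⋃₀ F ∩ ⋃₀ G) =
      extension φ (⋃₀ F) + extension φ (⋃₀ G) := by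
  have hFG : ∀ A ∈ F ∪ G, IsHPolytope (id A) := fun A hA =>
    (Finset.mem_union.1 hA).elim (hF A) (hG A)
  have hFxG : ∀ AB ∈ F ×ˢ G, IsHPolytope (AB.1 ∩ AB.2) := fun AB hAB =>
    (hF _ (Finset.mem_product.1 hAB).1).inter (hG _ (Finset.mem_product.1 hAB).2).1
  have hU : ⋃₀ (F : Set (Set V)) ∪ ⋃₀ G = ⋃ A ∈ F ∪ G, id A := by
    ext x
    simp [or_and_right, exists_or]
  have hI : ⋃₀ (F : Set (Set V)) ∩ ⋃₀ G = ⋃ AB ∈ F ×ˢ G, AB.1 ∩ AB.2 := by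
    simp [Set.sUnion_inter_sUnion]
  have hsUnion : ∀ F : Finset (Set V), ⋃₀ (F : Set (Set V)) = ⋃ A ∈ F, id A := fun F => by
    simp [Set.sUnion_eq_biUnion]
  rw [hU, hI, hsUnion F, hsUnion G, hφ.extension_biUnion hempty hFG,
    hφ.extension_biUnion hempty hFxG, hφ.extension_biUnion hempty (A := id) hF,
    hφ.extension_biUnion hempty (A := id) hG, ← map_add, ← map_add]
  refine hφ.linearCombination_eq_of_ind_eq hempty
    (add_mem (inclusionExclusion_mem_supported hFG) (inclusionExclusion_mem_supported hFxG))
    (add_mem (inclusionExclusion_mem_supported (A := id) hF)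
      (inclusionExclusion_mem_supported (A := id) hG)) ?_
  simp only [map_add, linearCombination_ind_inclusionExclusion, ← hU, ← hI, ← hsUnion]
  exact Set.indicator_union_add_inter _ _ _

end Valuation

end Groemer

/-- Every weakly additive real function on convex polytopes is fully additive and
admits an additive extension (a valuation) to all polyhedra. -/
theorem stmt5 {n : ℕ} (φ : Set (E n) → ℝ) (hempty : φ ∅ = 0)
    (hweak : ∀ P : Set (E n), IsPolytope P → ∀ (u : E n) (c : ℝ), u ≠ 0 →
      (P ∩ {x | ⟪u, x⟫ = c}).Nonempty →
      φ P = φ (P ∩ {x | c ≤ ⟪u, x⟫}) + φ (P ∩ {x | ⟪u, x⟫ ≤ c}) - φ (P ∩ {x | ⟪u, x⟫ = c})) :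
    (∀ (m : ℕ) (A : Fin m → Set (E n)), (∀ i, IsPolytope (A i)) →
      IsPolytope (⋃ i, A i) →
      φ (⋃ i, A i) =
        ∑ s ∈ Finset.univ.powerset.filter (fun s : Finset (Fin m) => s.Nonempty),
          (-1 : ℝ) ^ (s.card + 1) * φ (⋂ i ∈ s, A i)) ∧
    ∃ φ' : Set (E n) → ℝ, (∀ P : Set (E n), IsPolytope P → φ' P = φ P) ∧ φ' ∅ = 0 ∧
      ∀ A B : Set (E n), IsPolyhedron A → IsPolyhedron B →
        φ' (A ∪ B) + φ' (A ∩ B) = φ' A + φ' B := by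
  have hφ : Groemer.WeaklyAdditive φ := hweak
  have hpoly : ∀ P : Set (E n), IsPolytope P → Groemer.IsHPolytope P := fun P hP =>
    Groemer.IsConvexPolytope.isHPolytope hP
  refine ⟨fun m A hA hU => ?_, Groemer.extension φ, fun P hP => ?_, ?_, ?_⟩
  · simpa using hφ.inclusion_exclusion hempty Finset.univ (fun i _ => hpoly _ (hA i))
      (by simpa using hpoly _ hU)
  · simpa using hφ.extension_eq hempty (Finsupp.single_mem_supported ℝ 1 (hpoly P hP)) (by simp)
  · simpa using hφ.extension_eq hempty (zero_mem _) (by ext; simp)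
  · rintro _ _ ⟨F, hF, rfl⟩ ⟨G, hG, rfl⟩
    exact hφ.extension_union_add_inter hempty (fun A hA => hpoly A (hF A hA))
      fun B hB => hpoly B (hG B hB)
end
end

section
/- Every weakly additive real function on the family of convex polyhedral cones in ℝⁿ is fully additive and admits an additive extension to the family of finite unions of relatively open polyhedral cones. -/
open scoped RealInnerProductSpace
open MeasureTheory

attribute [local instance] Classical.propDecidable

noncomputable section

/-!
Fix finitely many normals `M = -M`, `0 ∉ M`, enough to cut out every cone involved. The
hyperplanes `u^⊥`, `u ∈ M`, cut `ℝⁿ` into relatively open cells. Möbius inversion over the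
closures of the cells gives weights `ψ` on the cells such that `φ` of a closed cell is the total
weight of the cells it contains; weak additivity, applied one hyperplane at a time, propagates
this to every cone `{x | ⟪u, x⟫ ≤ 0 for u ∈ S}`, `S ⊆ M`. So on such cones `φ` is integration
against the cell weights, and `∑ c_C 1_C = 0` forces `∑ c_C φ(C) = 0`. Hence `φ` extends
linearly to the span of the indicators of polyhedral cones. This span is an algebra, so it
contains the indicators of relatively open cones (`C` minus finitely many closed halfspaces) and
of their finite unions, and both conclusions are identities between indicators pushed through
the extension.
-/

open Finset

theorem Finset.exists_sum_filter_subset_eq {α β : Type*} [DecidableEq α] [AddCommGroup β]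
    (𝓛 : Finset (Finset α)) (f : Finset α → β) :
    ∃ g : Finset α → β, ∀ A ∈ 𝓛, ∑ B ∈ 𝓛 with B ⊆ A, g B = f A := by
  refine induction_on_max_value card 𝓛 ⟨0, by simp⟩ ?_
  rintro A 𝓛 hA hmax ⟨g, hg⟩
  set g' := Function.update g A (f A - ∑ B ∈ 𝓛 with B ⊆ A, g B)
  have hg' : ∀ B ∈ 𝓛, g' B = g B := fun B hB => Function.update_of_ne (by grind) _ _
  refine ⟨g', fun A' hA' => ?_⟩
  rw [filter_insert]
  rcases mem_insert.1 hA' with rfl | hA'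
  · rw [if_pos subset_rfl, sum_insert (by simp [hA]),
      sum_congr rfl fun B hB => hg' B (mem_filter.1 hB).1]
    simp [g']
  · have hAA' : ¬ A ⊆ A' := fun h => hA (eq_of_subset_of_card_le h (hmax A' hA') ▸ hA')
    rw [if_neg hAA', ← hg A' hA']
    exact sum_congr rfl fun B hB => hg' B (mem_filter.1 hB).1

section InnerProductSpace

variable {V : Type*} [NormedAddCommGroup V] [InnerProductSpace ℝ V]

theorem AddSubmonoid.exists_mem_forall_inner_eq_zero (K : AddSubmonoid V) (M : Finset V) :
    ∃ x ∈ K, ∀ u ∈ M, (∀ z ∈ K, 0 ≤ ⟪u, z⟫) → ⟪u, x⟫ = 0 → ∀ z ∈ K, ⟪u, z⟫ = 0 := by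
  have hy : ∀ u : V, ∃ y ∈ K, (∃ z ∈ K, ⟪u, z⟫ ≠ 0) → ⟪u, y⟫ ≠ 0 := fun u =>
    if h : ∃ z ∈ K, ⟪u, z⟫ ≠ 0 then ⟨h.choose, h.choose_spec.1, fun _ => h.choose_spec.2⟩
    else ⟨0, K.zero_mem, fun h' => (h h').elim⟩
  choose y hyK hy using hy
  refine ⟨∑ v ∈ M, y v, K.sum_mem fun v _ => hyK v, fun u hu hnonneg hux => ?_⟩
  rw [inner_sum, sum_eq_zero_iff_of_nonneg fun v _ => hnonneg _ (hyK v)] at hux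
  by_contra! h
  exact hy u h (hux u hu)

lemma inner_eq_zero_of_mem_affineSpan {C : Set V} {u z : V} (hu : ∀ y ∈ C, ⟪u, y⟫ = 0)
    (hz : z ∈ affineSpan ℝ C) : ⟪u, z⟫ = 0 :=
  affineSpan_le (Q := (LinearMap.ker (innerₛₗ ℝ u)).toAffineSubspace).2 hu hz

lemma exists_smul_sub_add_mem_of_mem_intrinsicInterior {C : Set V} {x w : V}
    (hx : x ∈ intrinsicInterior ℝ C) (hw : w ∈ affineSpan ℝ C) :
    ∃ t > (0 : ℝ), t • (x - w) + x ∈ C := by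
  obtain ⟨y, hy, rfl⟩ := mem_intrinsicInterior.1 hx
  let f : ℝ → affineSpan ℝ C := fun t =>
    ⟨t • ((y : V) - w) + y, AffineSubspace.smul_vsub_vadd_mem _ t y.2 hw y.2⟩
  have hf0 : f 0 = y := Subtype.ext (by simp [f])
  have hev : ∀ᶠ t in nhds 0, f t ∈ interior ((↑) ⁻¹' C : Set (affineSpan ℝ C)) :=
    (show Continuous f by fun_prop).continuousAt.preimage_mem_nhds
      (hf0 ▸ isOpen_interior.mem_nhds hy)
  obtain ⟨t, htC, ht⟩ := ((eventually_nhdsWithin_of_eventually_nhds hev).and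
    (self_mem_nhdsWithin (s := Set.Ioi 0))).exists
  exact ⟨t, ht, interior_subset (s := ((↑) ⁻¹' C : Set (affineSpan ℝ C))) htC⟩

end InnerProductSpace

section IndicatorSubalgebra

variable {X R : Type*} [CommRing R] (𝒜 : Subalgebra R (X → R))

lemma Subalgebra.indicator_biInter_mem {ι : Type*} (s : Finset ι) {A : ι → Set X}
    (hA : ∀ i ∈ s, (A i).indicator (1 : X → R) ∈ 𝒜) : (⋂ i ∈ s, A i).indicator 1 ∈ 𝒜 := by
  rw [← prod_const_one (s := s), ← prod_indicator]
  exact prod_mem hA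

lemma Subalgebra.indicator_biUnion_mem {ι : Type*} (s : Finset ι) {A : ι → Set X}
    (hA : ∀ i ∈ s, (A i).indicator (1 : X → R) ∈ 𝒜) : (⋃ i ∈ s, A i).indicator 1 ∈ 𝒜 := by
  have hIE : (⋃ i ∈ s, A i).indicator (1 : X → R) = ∑ t ∈ s.powerset with t.Nonempty,
      (-1 : ℤ) ^ (#t + 1) • (⋂ i ∈ t, A i).indicator 1 := by
    ext x
    simpa using indicator_biUnion_eq_sum_powerset s A (1 : X → R) x
  rw [hIE]
  exact sum_mem fun t ht => zsmul_mem (𝒜.indicator_biInter_mem t fun i hi =>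
    hA i (mem_powerset.1 (mem_filter.1 ht).1 hi)) _

lemma Subalgebra.indicator_compl_mem {A : Set X} (hA : A.indicator (1 : X → R) ∈ 𝒜) :
    Aᶜ.indicator 1 ∈ 𝒜 := by
  rw [Set.indicator_compl]
  exact sub_mem (one_mem 𝒜) hA

end IndicatorSubalgebra

namespace ConeValuation

open Finsupp

variable {n : ℕ}

def IsWeaklyAdditive (φ : Set (E n) → ℝ) : Prop :=
  ∀ C : Set (E n), IsPolyhedralCone C → ∀ u : E n, u ≠ 0 →
    φ C = φ (C ∩ {x | 0 ≤ ⟪u, x⟫}) + φ (C ∩ {x | ⟪u, x⟫ ≤ 0}) - φ (C ∩ {x | ⟪u, x⟫ = 0})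

def polyCone (S : Finset (E n)) : Set (E n) := {x | ∀ u ∈ S, ⟪u, x⟫ ≤ 0}

lemma isPolyhedralCone_polyCone (S : Finset (E n)) : IsPolyhedralCone (polyCone S) := ⟨S, rfl⟩

lemma isPolyhedralCone_univ : IsPolyhedralCone (Set.univ : Set (E n)) :=
  ⟨∅, by ext; simp⟩

lemma isPolyhedralCone_nonneg (u : E n) : IsPolyhedralCone {x : E n | 0 ≤ ⟪u, x⟫} :=
  ⟨{-u}, by ext; simp [inner_neg_left]⟩

lemma _root_.IsPolyhedralCone.inter {C D : Set (E n)} (hC : IsPolyhedralCone C)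
    (hD : IsPolyhedralCone D) : IsPolyhedralCone (C ∩ D) := by
  obtain ⟨s, rfl⟩ := hC
  obtain ⟨t, rfl⟩ := hD
  exact ⟨s ∪ t, by ext; simp [or_imp, forall_and]⟩

lemma isPolyhedralCone_biInter {ι : Type*} (s : Finset ι) {A : ι → Set (E n)}
    (hA : ∀ i ∈ s, IsPolyhedralCone (A i)) : IsPolyhedralCone (⋂ i ∈ s, A i) := by
  induction s using Finset.induction_on with
  | empty => simpa using isPolyhedralCone_univ
  | insert i s _ ih =>
    rw [set_biInter_insert]
    exact (hA i (mem_insert_self i s)).inter (ih fun j hj => hA j (mem_insert_of_mem hj))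

lemma polyCone_erase_zero (S : Finset (E n)) : polyCone (S.erase 0) = polyCone S := by
  ext x
  simp only [polyCone, Set.mem_ofPred_eq, mem_erase]
  exact ⟨fun h u hu => if hu0 : u = 0 then by simp [hu0] else h u ⟨hu0, hu⟩,
    fun h u hu => h u hu.2⟩

lemma polyCone_inter_nonpos (S : Finset (E n)) (u : E n) :
    polyCone S ∩ {x | ⟪u, x⟫ ≤ 0} = polyCone (insert u S) := by
  ext x; simp [polyCone, and_comm]

lemma polyCone_inter_nonneg (S : Finset (E n)) (u : E n) :
    polyCone S ∩ {x | 0 ≤ ⟪u, x⟫} = polyCone (insert (-u) S) := by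
  ext x; simp [polyCone, inner_neg_left, and_comm]

lemma polyCone_inter_eq_zero (S : Finset (E n)) (u : E n) :
    polyCone S ∩ {x | ⟪u, x⟫ = 0} = polyCone (insert u (insert (-u) S)) := by
  ext x; simp [polyCone, inner_neg_left, le_antisymm_iff]; tauto

lemma exists_symmetric_normals (F : Finset (Set (E n))) (hF : ∀ C ∈ F, IsPolyhedralCone C) :
    ∃ M : Finset (E n), (0 : E n) ∉ M ∧ (∀ u ∈ M, -u ∈ M) ∧
      ∀ C ∈ F, ∃ S ⊆ M, C = polyCone S := by
  choose! s hs using hF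
  let T := F.biUnion s
  refine ⟨(T ∪ T.image Neg.neg).erase 0, notMem_erase 0 _, fun u hu => ?_, fun C hC => ?_⟩
  · simp only [mem_erase, mem_union, mem_image] at hu ⊢
    refine ⟨neg_ne_zero.2 hu.1, ?_⟩
    rcases hu.2 with h | ⟨v, hv, rfl⟩
    · exact Or.inr ⟨u, h, rfl⟩
    · exact Or.inl ((neg_neg v).symm ▸ hv)
  · refine ⟨(s C).erase 0, erase_subset_erase 0 (subset_union_left.trans' ?_), ?_⟩
    · exact subset_biUnion_of_mem s hC
    · rw [polyCone_erase_zero]; exact hs C hC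

/- Since `M = -M`, a cell of the arrangement `{u^⊥ | u ∈ M}` is determined by the normals that
are positive on it; these finsets label the cells. -/
def posNormals (M : Finset (E n)) (x : E n) : Finset (E n) := M.filter fun u => 0 < ⟪u, x⟫

def cellLabels (M : Finset (E n)) : Finset (Finset (E n)) :=
  M.powerset.filter fun A => ∃ x, posNormals M x = A

lemma posNormals_mem_cellLabels (M : Finset (E n)) (x : E n) :
    posNormals M x ∈ cellLabels M :=
  mem_filter.2 ⟨mem_powerset.2 (filter_subset _ _), x, rfl⟩

lemma neg_notMem_of_mem_cellLabels {M A : Finset (E n)} (hA : A ∈ cellLabels M) {u : E n}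
    (hu : u ∈ A) : -u ∉ A := by
  obtain ⟨-, x, rfl⟩ := mem_filter.1 hA
  simp only [posNormals, mem_filter, inner_neg_left, neg_pos, not_and, not_lt]
  exact fun _ => (mem_filter.1 hu).2.le

lemma mem_polyCone_iff_disjoint {M S : Finset (E n)} (hS : S ⊆ M) {x : E n} :
    x ∈ polyCone S ↔ Disjoint S (posNormals M x) := by
  simp only [polyCone, posNormals, Set.mem_ofPred_eq, disjoint_left, mem_filter, not_and, not_lt]
  exact forall₂_congr fun u hu => ⟨fun h _ => h, fun h => h (hS hu)⟩

lemma mem_polyCone_sdiff_iff {M P : Finset (E n)} {x : E n} :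
    x ∈ polyCone (M \ P) ↔ posNormals M x ⊆ P := by
  simp only [polyCone, posNormals, Set.mem_ofPred_eq, subset_iff, mem_filter, mem_sdiff, and_imp]
  exact forall₂_congr fun u _ => by rw [← not_le, not_imp_comm]

lemma exists_polyCone_eq_sdiff_posNormals {M S : Finset (E n)} (hSM : S ⊆ M)
    (hS : ∀ u ∈ M, u ∉ S → -u ∈ S) : ∃ x, polyCone S = polyCone (M \ posNormals M x) := by
  let K : AddSubmonoid (E n) :=
    { carrier := polyCone S
      add_mem' := fun hx hy u hu => by
        rw [inner_add_right]; exact add_nonpos (hx u hu) (hy u hu)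
      zero_mem' := fun u _ => (inner_zero_right u).le }
  obtain ⟨x, hxK, hx⟩ := K.exists_mem_forall_inner_eq_zero M
  refine ⟨x, Set.Subset.antisymm (fun y hy u hu => ?_) (fun y hy u hu => ?_)⟩
  · obtain ⟨huM, hux⟩ := mem_sdiff.1 hu
    by_cases huS : u ∈ S
    · exact hy u huS
    have hnonneg : ∀ z ∈ K, 0 ≤ ⟪u, z⟫ := fun z hz => by
      simpa [inner_neg_left] using hz (-u) (hS u huM huS)
    have hux0 : ⟪u, x⟫ = 0 :=
      le_antisymm (not_lt.1 fun h => hux (mem_filter.2 ⟨huM, h⟩)) (hnonneg x hxK)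
    exact (hx u huM hnonneg hux0 y hy).le
  · exact hy u (mem_sdiff.2 ⟨hSM hu, fun h => (mem_filter.1 h).2.not_ge (hxK u hu)⟩)

lemma sum_cellLabels_disjoint_eq (M S : Finset (E n)) (u : E n) (ψ : Finset (E n) → ℝ) :
    ∑ A ∈ cellLabels M with Disjoint S A, ψ A =
      ∑ A ∈ cellLabels M with Disjoint (insert (-u) S) A, ψ A +
        ∑ A ∈ cellLabels M with Disjoint (insert u S) A, ψ A -
        ∑ A ∈ cellLabels M with Disjoint (insert u (insert (-u) S)) A, ψ A := by
  simp only [sum_filter, ← sum_add_distrib, ← sum_sub_distrib]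
  refine sum_congr rfl fun A hA => ?_
  have := fun hu : u ∈ A => neg_notMem_of_mem_cellLabels hA hu
  simp only [disjoint_insert_left]
  by_cases hS : Disjoint S A <;> by_cases hu : u ∈ A <;> simp_all

theorem exists_cellWeight {φ : Set (E n) → ℝ} (hφ : IsWeaklyAdditive φ) {M : Finset (E n)}
    (hM0 : (0 : E n) ∉ M) (hMneg : ∀ u ∈ M, -u ∈ M) :
    ∃ ψ : Finset (E n) → ℝ,
      ∀ S ⊆ M, φ (polyCone S) = ∑ A ∈ cellLabels M with Disjoint S A, ψ A := by
  obtain ⟨ψ, hψ⟩ := exists_sum_filter_subset_eq (cellLabels M) fun A => φ (polyCone (M \ A))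
  refine ⟨ψ, fun S hS => ?_⟩
  induction hk : #(M \ S) using Nat.strong_induction_on generalizing S with | _ k ih
  by_cases hfree : ∃ u ∈ M, u ∉ S ∧ -u ∉ S
  · obtain ⟨u, huM, huS, hnuS⟩ := hfree
    have hcard : ∀ v ∈ M, v ∉ S → #(M \ insert v S) < k := fun v hv hvS => by
      rw [← hk, sdiff_insert]; exact card_erase_lt_of_mem (mem_sdiff.2 ⟨hv, hvS⟩)
    have hcard₂ : #(M \ insert u (insert (-u) S)) < k :=
      (card_le_card (sdiff_subset_sdiff subset_rfl (subset_insert _ _))).trans_lt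
        (hcard _ (hMneg u huM) hnuS)
    rw [hφ _ (isPolyhedralCone_polyCone S) u (ne_of_mem_of_not_mem huM hM0),
      polyCone_inter_nonneg, polyCone_inter_nonpos, polyCone_inter_eq_zero,
      ih _ (hcard _ (hMneg u huM) hnuS) _ (insert_subset (hMneg u huM) hS) rfl,
      ih _ (hcard u huM huS) _ (insert_subset huM hS) rfl,
      ih _ hcard₂ _ (insert_subset huM (insert_subset (hMneg u huM) hS)) rfl,
      ← sum_cellLabels_disjoint_eq]
  · -- `polyCone S` is now the closure of a cell, where `ψ` was fitted by Möbius inversion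
    push Not at hfree
    obtain ⟨x, hx⟩ := exists_polyCone_eq_sdiff_posNormals hS hfree
    rw [hx, ← hψ _ (posNormals_mem_cellLabels M x)]
    refine sum_congr (filter_congr fun A hA => ?_) fun _ _ => rfl
    obtain ⟨-, y, rfl⟩ := mem_filter.1 hA
    rw [← mem_polyCone_iff_disjoint hS, hx, mem_polyCone_sdiff_iff]

variable (n) in
abbrev polyhedralCombinations : Submodule ℝ (Set (E n) →₀ ℝ) :=
  supported ℝ ℝ {C | IsPolyhedralCone C}

variable (n) in
abbrev indicatorMap : (Set (E n) →₀ ℝ) →ₗ[ℝ] E n → ℝ :=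
  linearCombination ℝ fun C => C.indicator 1

theorem linearCombination_eq_zero_of_indicatorMap_eq_zero {φ : Set (E n) → ℝ}
    (hφ : IsWeaklyAdditive φ) {c : Set (E n) →₀ ℝ} (hc : c ∈ polyhedralCombinations n)
    (h : indicatorMap n c = 0) : linearCombination ℝ φ c = 0 := by
  obtain ⟨M, hM0, hMneg, hMc⟩ := exists_symmetric_normals c.support fun C hC => hc hC
  choose! S hSM hS using hMc
  obtain ⟨ψ, hψ⟩ := exists_cellWeight hφ hM0 hMneg
  have hφc : ∀ C ∈ c.support, φ C = ∑ A ∈ cellLabels M with Disjoint (S C) A, ψ A :=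
    fun C hC => (congrArg φ (hS C hC)).trans (hψ _ (hSM C hC))
  have hcells : ∀ A ∈ cellLabels M,
      ∑ C ∈ c.support, (if Disjoint (S C) A then c C else 0) = 0 := by
    intro A hA
    obtain ⟨-, y, rfl⟩ := mem_filter.1 hA
    have hy := congrFun h y
    rw [linearCombination_apply, Finsupp.sum, Finset.sum_apply, Pi.zero_apply] at hy
    refine Eq.trans (sum_congr rfl fun C hC => ?_) hy
    have hyC : y ∈ C ↔ Disjoint (S C) (posNormals M y) := by
      rw [← mem_polyCone_iff_disjoint (hSM C hC), ← hS C hC]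
    simp [Set.indicator_apply, hyC]
  calc linearCombination ℝ φ c
      = ∑ C ∈ c.support, ∑ A ∈ cellLabels M, if Disjoint (S C) A then c C * ψ A else 0 := by
        rw [linearCombination_apply, Finsupp.sum]
        refine sum_congr rfl fun C hC => ?_
        rw [smul_eq_mul, hφc C hC, Finset.mul_sum, sum_filter]
    _ = ∑ A ∈ cellLabels M, (∑ C ∈ c.support, if Disjoint (S C) A then c C else 0) * ψ A := by
        rw [Finset.sum_comm]
        simp only [Finset.sum_mul, ite_mul, zero_mul]
    _ = 0 := sum_eq_zero fun A hA => by rw [hcells A hA, zero_mul]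

lemma linearCombination_eq_of_indicatorMap_eq {φ : Set (E n) → ℝ} (hφ : IsWeaklyAdditive φ)
    {c d : Set (E n) →₀ ℝ} (hc : c ∈ polyhedralCombinations n)
    (hd : d ∈ polyhedralCombinations n) (h : indicatorMap n c = indicatorMap n d) :
    linearCombination ℝ φ c = linearCombination ℝ φ d := by
  rw [← sub_eq_zero, ← map_sub]
  exact linearCombination_eq_zero_of_indicatorMap_eq_zero hφ (sub_mem hc hd)
    (by rw [map_sub, h, sub_self])

def extension (φ : Set (E n) → ℝ) (S : Set (E n)) : ℝ :=
  if h : ∃ c ∈ polyhedralCombinations n, indicatorMap n c = S.indicator 1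
  then linearCombination ℝ φ h.choose else 0

lemma extension_eq {φ : Set (E n) → ℝ} (hφ : IsWeaklyAdditive φ) {S : Set (E n)}
    {c : Set (E n) →₀ ℝ} (hc : c ∈ polyhedralCombinations n)
    (h : indicatorMap n c = S.indicator 1) : extension φ S = linearCombination ℝ φ c := by
  have hS : ∃ c ∈ polyhedralCombinations n, indicatorMap n c = S.indicator 1 := ⟨c, hc, h⟩
  rw [extension, dif_pos hS]
  exact linearCombination_eq_of_indicatorMap_eq hφ hS.choose_spec.1 hc
    (hS.choose_spec.2.trans h.symm)

lemma extension_of_isPolyhedralCone {φ : Set (E n) → ℝ} (hφ : IsWeaklyAdditive φ)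
    {C : Set (E n)} (hC : IsPolyhedralCone C) : extension φ C = φ C := by
  rw [extension_eq hφ (single_mem_supported ℝ 1 hC) (by simp), linearCombination_single,
    one_smul]

lemma extension_empty {φ : Set (E n) → ℝ} (hφ : IsWeaklyAdditive φ) : extension φ ∅ = 0 := by
  rw [extension_eq hφ (zero_mem _) (by simp [Pi.zero_def]), map_zero]

theorem inclusion_exclusion {φ : Set (E n) → ℝ} (hφ : IsWeaklyAdditive φ) {ι : Type*}
    (s : Finset ι) {A : ι → Set (E n)} (hA : ∀ i ∈ s, IsPolyhedralCone (A i))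
    (hU : IsPolyhedralCone (⋃ i ∈ s, A i)) :
    φ (⋃ i ∈ s, A i) =
      ∑ t ∈ s.powerset with t.Nonempty, (-1 : ℝ) ^ (#t + 1) * φ (⋂ i ∈ t, A i) := by
  let c := ∑ t ∈ s.powerset with t.Nonempty, single (⋂ i ∈ t, A i) ((-1 : ℝ) ^ (#t + 1))
  have hc : c ∈ polyhedralCombinations n :=
    sum_mem fun t ht => single_mem_supported ℝ _ (isPolyhedralCone_biInter t fun i hi =>
      hA i (mem_powerset.1 (mem_filter.1 ht).1 hi))
  have h := linearCombination_eq_of_indicatorMap_eq hφ (single_mem_supported ℝ 1 hU) hc (by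
    ext x
    simp [c, map_sum, linearCombination_single, indicator_biUnion_eq_sum_powerset])
  simpa [c, map_sum, linearCombination_single] using h

variable (n) in
def polyhedralIndicators : Set (E n → ℝ) := (fun C => C.indicator 1) '' {C | IsPolyhedralCone C}

lemma mul_mem_span_polyhedralIndicators {f g : E n → ℝ}
    (hf : f ∈ Submodule.span ℝ (polyhedralIndicators n))
    (hg : g ∈ Submodule.span ℝ (polyhedralIndicators n)) :
    f * g ∈ Submodule.span ℝ (polyhedralIndicators n) := by
  have hfg := Submodule.span_mul_span ℝ (polyhedralIndicators n) (polyhedralIndicators n) ▸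
    Submodule.mul_mem_mul hf hg
  refine Submodule.span_mono (Set.mul_subset_iff.2 ?_) hfg
  rintro _ ⟨C, hC, rfl⟩ _ ⟨D, hD, rfl⟩
  exact ⟨C ∩ D, hC.inter hD, Set.inter_indicator_one⟩

variable (n) in
def polyhedralAlgebra : Subalgebra ℝ (E n → ℝ) :=
  (Submodule.span ℝ (polyhedralIndicators n)).toSubalgebra
    (Submodule.subset_span ⟨Set.univ, isPolyhedralCone_univ, Set.indicator_univ 1⟩)
    fun _ _ => mul_mem_span_polyhedralIndicators

lemma mem_polyhedralAlgebra_iff {f : E n → ℝ} :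
    f ∈ polyhedralAlgebra n ↔ ∃ c ∈ polyhedralCombinations n, indicatorMap n c = f :=
  mem_span_image_iff_linearCombination ℝ

lemma indicator_mem_polyhedralAlgebra {C : Set (E n)} (hC : IsPolyhedralCone C) :
    C.indicator 1 ∈ polyhedralAlgebra n :=
  Submodule.subset_span ⟨C, hC, rfl⟩

lemma extension_union_add_inter {φ : Set (E n) → ℝ} (hφ : IsWeaklyAdditive φ) {A B : Set (E n)}
    (hA : A.indicator 1 ∈ polyhedralAlgebra n) (hB : B.indicator 1 ∈ polyhedralAlgebra n) :
    extension φ (A ∪ B) + extension φ (A ∩ B) = extension φ A + extension φ B := by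
  have hI : (A ∩ B).indicator 1 ∈ polyhedralAlgebra n :=
    Set.inter_indicator_one (M₀ := ℝ) ▸ mul_mem hA hB
  have hU : (A ∪ B).indicator 1 ∈ polyhedralAlgebra n := by
    rw [eq_sub_of_add_eq (Set.indicator_union_add_inter (1 : E n → ℝ) A B)]
    exact sub_mem (add_mem hA hB) hI
  obtain ⟨cA, hcA, hA⟩ := mem_polyhedralAlgebra_iff.1 hA
  obtain ⟨cB, hcB, hB⟩ := mem_polyhedralAlgebra_iff.1 hB
  obtain ⟨cI, hcI, hI⟩ := mem_polyhedralAlgebra_iff.1 hI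
  obtain ⟨cU, hcU, hU⟩ := mem_polyhedralAlgebra_iff.1 hU
  rw [extension_eq hφ hcA hA, extension_eq hφ hcB hB, extension_eq hφ hcI hI,
    extension_eq hφ hcU hU, ← map_add, ← map_add]
  refine linearCombination_eq_of_indicatorMap_eq hφ (add_mem hcU hcI) (add_mem hcA hcB) ?_
  rw [map_add, map_add, hA, hB, hI, hU, Set.indicator_union_add_inter]

lemma intrinsicInterior_polyCone (S : Finset (E n)) :
    intrinsicInterior ℝ (polyCone S) =
      polyCone S ∩ ⋂ u ∈ {u ∈ S | ∃ y ∈ polyCone S, ⟪u, y⟫ ≠ 0}, {x | ⟪u, x⟫ < 0} := by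
  ext x
  refine ⟨fun hx => ⟨intrinsicInterior_subset hx, Set.mem_iInter₂.2 fun u hu => ?_⟩,
    fun ⟨hxC, hx⟩ => mem_intrinsicInterior.2 ⟨⟨x, subset_affineSpan ℝ _ hxC⟩, ?_, rfl⟩⟩
  · obtain ⟨huS, w, hwC, hw⟩ := mem_filter.1 hu
    obtain ⟨t, ht, htC⟩ :=
      exists_smul_sub_add_mem_of_mem_intrinsicInterior hx (subset_affineSpan ℝ _ hwC)
    have hut := htC u huS
    rw [inner_add_right, real_inner_smul_right, inner_sub_right] at hut
    have huw : ⟪u, w⟫ < 0 := (hwC u huS).lt_of_ne hw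
    show ⟪u, x⟫ < 0
    nlinarith
  · let U : Set (affineSpan ℝ (polyCone S)) :=
      (↑) ⁻¹' ⋂ u ∈ {u ∈ S | ∃ y ∈ polyCone S, ⟪u, y⟫ ≠ 0}, {x | ⟪u, x⟫ < 0}
    have hUopen : IsOpen U :=
      (isOpen_biInter_finset fun u _ => isOpen_lt (by fun_prop) continuous_const).preimage
        continuous_subtype_val
    have hUC : U ⊆ (↑) ⁻¹' polyCone S := by
      intro z hz u hu
      by_cases hu' : ∃ y ∈ polyCone S, ⟪u, y⟫ ≠ 0
      · exact (Set.mem_iInter₂.1 hz u (mem_filter.2 ⟨hu, hu'⟩)).le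
      · push Not at hu'
        exact (inner_eq_zero_of_mem_affineSpan hu' z.2).le
    exact interior_maximal hUC hUopen hx

lemma indicator_mem_polyhedralAlgebra_of_isROCone {A : Set (E n)} (hA : IsROCone A) :
    A.indicator 1 ∈ polyhedralAlgebra n := by
  obtain ⟨_, ⟨S, rfl⟩, rfl⟩ := hA
  rw [← polyCone, intrinsicInterior_polyCone, Set.inter_indicator_one]
  refine mul_mem (indicator_mem_polyhedralAlgebra (isPolyhedralCone_polyCone S))
    ((polyhedralAlgebra n).indicator_biInter_mem _ fun u _ => ?_)
  have hcompl : {x : E n | ⟪u, x⟫ < 0} = {x | 0 ≤ ⟪u, x⟫}ᶜ := by ext; simp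
  rw [hcompl]
  exact (polyhedralAlgebra n).indicator_compl_mem
    (indicator_mem_polyhedralAlgebra (isPolyhedralCone_nonneg u))

lemma indicator_mem_polyhedralAlgebra_of_isROConeUnion {A : Set (E n)}
    (hA : IsROConeUnion A) : A.indicator 1 ∈ polyhedralAlgebra n := by
  obtain ⟨F, hF, rfl⟩ := hA
  rw [Set.sUnion_eq_biUnion]
  exact (polyhedralAlgebra n).indicator_biUnion_mem F fun A hA =>
    indicator_mem_polyhedralAlgebra_of_isROCone (hF A hA)

end ConeValuation

open ConeValuation

theorem stmt6_general {n : ℕ} (φ : Set (E n) → ℝ)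
    (hweak : ∀ C : Set (E n), IsPolyhedralCone C → ∀ u : E n, u ≠ 0 →
      φ C = φ (C ∩ {x | 0 ≤ ⟪u, x⟫}) + φ (C ∩ {x | ⟪u, x⟫ ≤ 0}) - φ (C ∩ {x | ⟪u, x⟫ = 0})) :
    (∀ (m : ℕ) (A : Fin m → Set (E n)), (∀ i, IsPolyhedralCone (A i)) →
      IsPolyhedralCone (⋃ i, A i) →
      φ (⋃ i, A i) =
        ∑ s ∈ Finset.univ.powerset.filter (fun s : Finset (Fin m) => s.Nonempty),
          (-1 : ℝ) ^ (s.card + 1) * φ (⋂ i ∈ s, A i)) ∧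
    ∃ φ' : Set (E n) → ℝ, (∀ C : Set (E n), IsPolyhedralCone C → φ' C = φ C) ∧ φ' ∅ = 0 ∧
      ∀ A B : Set (E n), IsROConeUnion A → IsROConeUnion B →
        φ' (A ∪ B) + φ' (A ∩ B) = φ' A + φ' B := by
  have hφ : IsWeaklyAdditive φ := hweak
  refine ⟨fun m A hA hU => ?_, extension φ, fun C hC => extension_of_isPolyhedralCone hφ hC,
    extension_empty hφ, fun A B hA hB => extension_union_add_inter hφ
      (indicator_mem_polyhedralAlgebra_of_isROConeUnion hA)
      (indicator_mem_polyhedralAlgebra_of_isROConeUnion hB)⟩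
  simpa using inclusion_exclusion hφ univ (fun i _ => hA i) (by simpa using hU)

/-- Every weakly additive real function on convex polyhedral cones is fully additive
and admits an additive extension to finite unions of relatively open polyhedral cones. -/
theorem stmt6 {n : ℕ} (φ : Set (E n) → ℝ) (hempty : φ ∅ = 0)
    (hweak : ∀ C : Set (E n), IsPolyhedralCone C → ∀ u : E n, u ≠ 0 →
      φ C = φ (C ∩ {x | 0 ≤ ⟪u, x⟫}) + φ (C ∩ {x | ⟪u, x⟫ ≤ 0}) - φ (C ∩ {x | ⟪u, x⟫ = 0})) :
    (∀ (m : ℕ) (A : Fin m → Set (E n)), (∀ i, IsPolyhedralCone (A i)) →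
      IsPolyhedralCone (⋃ i, A i) →
      φ (⋃ i, A i) =
        ∑ s ∈ Finset.univ.powerset.filter (fun s : Finset (Fin m) => s.Nonempty),
          (-1 : ℝ) ^ (s.card + 1) * φ (⋂ i ∈ s, A i)) ∧
    ∃ φ' : Set (E n) → ℝ, (∀ C : Set (E n), IsPolyhedralCone C → φ' C = φ C) ∧ φ' ∅ = 0 ∧
      ∀ A B : Set (E n), IsROConeUnion A → IsROConeUnion B →
        φ' (A ∪ B) + φ' (A ∩ B) = φ' A + φ' B :=
  stmt6_general φ hweak
end
end

section
/- Fix x ∈ ℝⁿ and a hyperplane H through x, and let L be the translate of H through the origin. Then for every polyhedron P ⊂ ℝⁿ, Tan(P ∩ H⁺, x) = Tan(P, x) ∩ L⁺, where H⁺ is a closed halfspace bounded by H and L⁺ the corresponding halfspace bounded by L. -/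
open scoped RealInnerProductSpace
open MeasureTheory

attribute [local instance] Classical.propDecidable

noncomputable section

/- The tangent cone is local: shrinking the length of a segment keeps it inside, so
`Tan` commutes with intersections, and for a closed halfspace whose boundary passes through
`x` the tangent cone is the parallel halfspace through the origin. -/

theorem segment_add_smul_subset_of_le {V : Type*} [AddCommGroup V] [Module ℝ V] (x v : V)
    {l l' : ℝ} (hl' : 0 ≤ l') (hll' : l' ≤ l) :
    segment ℝ x (x + l' • v) ⊆ segment ℝ x (x + l • v) := by
  rcases hl'.eq_or_lt with rfl | hl'_pos
  · simp [left_mem_segment]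
  have hl : 0 < l := hl'_pos.trans_le hll'
  refine (convex_segment _ _).segment_subset (left_mem_segment ℝ _ _) ⟨1 - l' / l, l' / l,
    sub_nonneg.2 ((div_le_one hl).2 hll'), div_nonneg hl' hl.le, sub_add_cancel _ _, ?_⟩
  rw [smul_add, smul_smul, div_mul_cancel₀ _ hl.ne', ← add_assoc, ← add_smul, sub_add_cancel,
    one_smul]

section

variable {n : ℕ}

theorem tan_inter (P Q : Set (E n)) (x : E n) : Tan (P ∩ Q) x = Tan P x ∩ Tan Q x := by
  ext v
  refine ⟨fun ⟨l, hl, hPQ⟩ => ⟨⟨l, hl, hPQ.trans Set.inter_subset_left⟩,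
    ⟨l, hl, hPQ.trans Set.inter_subset_right⟩⟩, ?_⟩
  rintro ⟨⟨l₁, hl₁, hP⟩, ⟨l₂, hl₂, hQ⟩⟩
  refine ⟨min l₁ l₂, lt_min hl₁ hl₂, Set.subset_inter ?_ ?_⟩
  · exact (segment_add_smul_subset_of_le x v (lt_min hl₁ hl₂).le (min_le_left _ _)).trans hP
  · exact (segment_add_smul_subset_of_le x v (lt_min hl₁ hl₂).le (min_le_right _ _)).trans hQ

theorem tan_halfSpace (x u : E n) :
    Tan {y | ⟪u, x⟫ ≤ ⟪u, y⟫} x = {v | 0 ≤ ⟪u, v⟫} := by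
  have hconv : Convex ℝ {y : E n | ⟪u, x⟫ ≤ ⟪u, y⟫} :=
    convex_halfSpace_ge (innerₛₗ ℝ u).isLinear _
  ext v
  simp only [Tan, Set.mem_ofPred_eq]
  constructor
  · rintro ⟨l, hl, hseg⟩
    have hend : ⟪u, x⟫ ≤ ⟪u, x + l • v⟫ := hseg (right_mem_segment ℝ _ _)
    rw [inner_add_right, inner_smul_right] at hend
    exact nonneg_of_mul_nonneg_right (by linarith) hl
  · intro hv
    refine ⟨1, one_pos, hconv.segment_subset (le_refl ⟪u, x⟫) ?_⟩
    simp only [Set.mem_ofPred_eq, one_smul, inner_add_right]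
    linarith

end

theorem stmt7_general {n : ℕ} (x u : E n) (P : Set (E n)) :
    Tan (P ∩ {y | ⟪u, x⟫ ≤ ⟪u, y⟫}) x = Tan P x ∩ {v | 0 ≤ ⟪u, v⟫} := by
  rw [tan_inter, tan_halfSpace]

/-- For a hyperplane `H` through `x` with normal `u` and `L` its translate through the
origin, `Tan(P ∩ H⁺, x) = Tan(P, x) ∩ L⁺` for every polyhedron `P`. -/
theorem stmt7 {n : ℕ} (x u : E n) (hu : u ≠ 0) (P : Set (E n)) (hP : IsPolyhedron P) :
    Tan (P ∩ {y | ⟪u, x⟫ ≤ ⟪u, y⟫}) x = Tan P x ∩ {v | 0 ≤ ⟪u, v⟫} :=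
  stmt7_general x u P
end
end
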